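/- arXiv:1807.10200 — 4 statements merged into one kernel-verified Lean document; each statement's English description precedes it below -/
import Mathlib

section
/- Let (α_n)_{n≥0} be a sequence of reals with 0 ≤ α_n ≤ 1 for all n and ∑_{n≥0} α_n = ∞. On the space Ω = (ℕ → Bool) equipped with the infinite product over n ∈ ℕ of Bernoulli measures with parameters α_n, the following holds almost surely: W(x)/(∑_{n≤x} α_n) → 1 as x → ∞, where W(x) := #{n ≤ x : ω(n) = true} for ω ∈ Ω. -/
open Filter Asymptotics MeasureTheory

def IsBernoulliProduct (μ : Measure (ℕ → Bool)) (α : ℕ → ℝ) : Prop :=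
  IsProbabilityMeasure μ ∧
  ∀ s : Finset ℕ, ∀ b : ℕ → Bool,
    μ {ω | ∀ n ∈ s, ω n = b n} =
      ∏ n ∈ s, ENNReal.ofReal (if b n then α n else 1 - α n)

open ProbabilityTheory Finset
open scoped Topology ENNReal

/-!
The count `W N = #{n < N | ω n}` has mean `A N = ∑ n < N, α n` and, the coordinates being
independent Bernoulli variables, variance at most `A N`. Along a subsequence `N k` with
`A (N k) ≈ (k + 1) ^ 2`, Chebyshev bounds `P(|W - A| ≥ ε A)` by `1 / (ε (k + 1)) ^ 2`, which is
summable, so by Borel–Cantelli `W (N k) / A (N k) → 1` almost surely. As `α n ≤ 1`, the ratios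
`A (N (k + 1)) / A (N k)` tend to `1`, and since `W` and `A` are monotone, `W N / A N` is squeezed
between its values at neighbouring terms of the subsequence.
-/

theorem StrictMono.exists_tendsto_atTop_mem_Ico {N : ℕ → ℕ} (hN : StrictMono N) :
    ∃ κ : ℕ → ℕ, Tendsto κ atTop atTop ∧ ∀ᶠ n in atTop, N (κ n) ≤ n ∧ n < N (κ n + 1) := by
  classical
  refine ⟨fun n => Nat.findGreatest (fun k => N k ≤ n) n, ?_, ?_⟩
  · exact Filter.tendsto_atTop.2 fun K => (eventually_ge_atTop (N K)).mono fun n hn =>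
      Nat.le_findGreatest ((hN.id_le K).trans hn) hn
  · filter_upwards [eventually_ge_atTop (N 0)] with n hn
    refine ⟨Nat.findGreatest_spec (P := fun k => N k ≤ n) (Nat.zero_le n) hn,
      lt_of_not_ge fun h => ?_⟩
    exact (Nat.lt_succ_self _).not_ge
      (Nat.le_findGreatest (P := fun k => N k ≤ n) ((hN.id_le _).trans h) h)

theorem tendsto_div_of_monotone_of_tendsto_div_subseq {u v : ℕ → ℝ} {l : ℝ}
    (hu : Monotone u) (hu0 : ∀ n, 0 ≤ u n) (hv : Monotone v) {N : ℕ → ℕ} (hN : StrictMono N)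
    (hvN : ∀ k, 0 < v (N k)) (hratio : Tendsto (fun k => v (N (k + 1)) / v (N k)) atTop (𝓝 1))
    (hsub : Tendsto (fun k => u (N k) / v (N k)) atTop (𝓝 l)) :
    Tendsto (fun n => u n / v n) atTop (𝓝 l) := by
  have hlower : Tendsto (fun k => u (N k) / v (N (k + 1))) atTop (𝓝 l) := by
    refine (div_one l ▸ hsub.div hratio one_ne_zero).congr fun k => ?_
    rw [Pi.div_apply, div_div_div_cancel_right₀ (hvN k).ne']
  have hupper : Tendsto (fun k => u (N (k + 1)) / v (N k)) atTop (𝓝 l) := by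
    refine (mul_one l ▸ ((tendsto_add_atTop_iff_nat 1).2 hsub).mul hratio).congr fun k => ?_
    rw [div_mul_div_cancel₀ (hvN (k + 1)).ne']
  obtain ⟨κ, hκ, hκN⟩ := hN.exists_tendsto_atTop_mem_Ico
  refine tendsto_of_tendsto_of_tendsto_of_le_of_le' (hlower.comp hκ) (hupper.comp hκ) ?_ ?_
  · filter_upwards [hκN] with n ⟨hle, hlt⟩
    exact div_le_div₀ (hu0 n) (hu hle) ((hvN _).trans_le (hv hle)) (hv hlt.le)
  · filter_upwards [hκN] with n ⟨hle, hlt⟩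
    exact div_le_div₀ (hu0 _) (hu hlt.le) (hvN _) (hv hle)

section SlowlyIncreasing

variable {A : ℕ → ℝ}

lemma exists_ge_lt_add_one_of_step_le_one (hstep : ∀ n, A (n + 1) ≤ A n + 1) (hA : Tendsto A atTop atTop)
    {t : ℝ} (ht : A 0 < t) : ∃ N, t ≤ A N ∧ A N < t + 1 := by
  classical
  have hex : ∃ N, t ≤ A N := (hA.eventually_ge_atTop t).exists
  obtain ⟨M, hM⟩ : ∃ M, Nat.find hex = M + 1 :=
    Nat.exists_eq_succ_of_ne_zero fun h => (Nat.find_spec hex).not_gt (h ▸ ht)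
  have hlt : A M < t := not_le.1 (Nat.find_min hex (hM ▸ M.lt_succ_self))
  exact ⟨M + 1, hM ▸ Nat.find_spec hex, by linarith [hstep M]⟩

lemma exists_strictMono_sq_le_tendsto_div (hmono : Monotone A) (hA0 : A 0 = 0)
    (hstep : ∀ n, A (n + 1) ≤ A n + 1) (hA : Tendsto A atTop atTop) :
    ∃ N : ℕ → ℕ, StrictMono N ∧ (∀ k : ℕ, ((k : ℝ) + 1) ^ 2 ≤ A (N k)) ∧
      Tendsto (fun k => A (N (k + 1)) / A (N k)) atTop (𝓝 1) := by
  choose N hN_ge hN_lt using fun k : ℕ =>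
    exists_ge_lt_add_one_of_step_le_one hstep hA (t := ((k : ℝ) + 1) ^ 2) (hA0 ▸ by positivity)
  have hpos k : 0 < A (N k) := lt_of_lt_of_le (by positivity) (hN_ge k)
  have hN : StrictMono N := strictMono_nat_of_lt_succ fun k => hmono.reflect_lt <| by
    have := hN_ge (k + 1)
    push_cast at this
    nlinarith [hN_lt k, (k.cast_nonneg : (0 : ℝ) ≤ k)]
  have hbound : Tendsto (fun k : ℕ => 1 + 4 * (1 / ((k : ℝ) + 1))) atTop (𝓝 1) := by
    simpa using (tendsto_one_div_add_atTop_nhds_zero_nat.const_mul (4 : ℝ)).const_add (1 : ℝ)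
  refine ⟨N, hN, hN_ge, tendsto_of_tendsto_of_tendsto_of_le_of_le tendsto_const_nhds hbound
    (fun k => (one_le_div (hpos k)).2 (hmono (hN.monotone k.le_succ))) fun k => ?_⟩
  have := hN_lt (k + 1)
  push_cast at this
  rw [div_le_iff₀ (hpos k)]
  calc A (N (k + 1)) ≤ ((k : ℝ) + 1) ^ 2 + 4 * (k + 1) := by nlinarith
    _ = (1 + 4 * (1 / ((k : ℝ) + 1))) * ((k : ℝ) + 1) ^ 2 := by field_simp
    _ ≤ (1 + 4 * (1 / ((k : ℝ) + 1))) * A (N k) := by gcongr; exact hN_ge k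

end SlowlyIncreasing

theorem ae_tendsto_div_integral_of_summable_variance {Ω : Type*} [MeasurableSpace Ω]
    {μ : Measure Ω} [IsFiniteMeasure μ] {Y : ℕ → Ω → ℝ} (hY : ∀ k, MemLp (Y k) 2 μ)
    (hpos : ∀ k, 0 < μ[Y k]) (hsum : Summable fun k => variance (Y k) μ / μ[Y k] ^ 2) :
    ∀ᵐ ω ∂μ, Tendsto (fun k => Y k ω / μ[Y k]) atTop (𝓝 1) := by
  have hdev : ∀ m : ℕ, ∀ᵐ ω ∂μ, ∀ᶠ k in atTop,
      ω ∉ {ω | μ[Y k] / (m + 1) ≤ |Y k ω - μ[Y k]|} := by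
    intro m
    refine ae_eventually_notMem (ne_top_of_le_ne_top ?_ (ENNReal.tsum_le_tsum fun k =>
      meas_ge_le_variance_div_sq (hY k) (div_pos (hpos k) m.cast_add_one_pos)))
    rw [← ENNReal.ofReal_tsum_of_nonneg (fun k => by have := variance_nonneg (Y k) μ; positivity)]
    · exact ENNReal.ofReal_ne_top
    · refine (hsum.mul_left (((m : ℝ) + 1) ^ 2)).congr fun k => ?_
      have := (hpos k).ne'
      field_simp
  filter_upwards [ae_all_iff.2 hdev] with ω hω
  refine Metric.tendsto_atTop.2 fun ε hε => ?_
  obtain ⟨m, hm⟩ := exists_nat_one_div_lt hε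
  obtain ⟨K, hK⟩ := eventually_atTop.1 (hω m)
  refine ⟨K, fun k hk => ?_⟩
  have hk : |Y k ω - μ[Y k]| < μ[Y k] / (m + 1) := not_le.1 (hK k hk)
  rw [Real.dist_eq, div_sub_one (hpos k).ne', abs_div, abs_of_pos (hpos k),
    div_lt_iff₀ (hpos k)]
  calc |Y k ω - μ[Y k]| < μ[Y k] / (m + 1) := hk
    _ = 1 / (m + 1) * μ[Y k] := by ring
    _ < ε * μ[Y k] := by gcongr; exact hpos k

lemma measurableSet_apply_eq_true (n : ℕ) : MeasurableSet {ω : ℕ → Bool | ω n = true} :=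
  measurableSet_eq_fun (measurable_pi_apply n) measurable_const

noncomputable def trueIndicator (n : ℕ) : (ℕ → Bool) → ℝ :=
  {ω | ω n = true}.indicator fun _ => 1

noncomputable def trueCount (N : ℕ) (ω : ℕ → Bool) : ℝ := #{n ∈ range N | ω n = true}

lemma trueCount_eq_sum (N : ℕ) : trueCount N = ∑ n ∈ range N, trueIndicator n := by
  ext ω
  simp [trueCount, trueIndicator, Finset.sum_apply, Set.indicator_apply, Finset.sum_boole]

lemma trueCount_nonneg (N : ℕ) (ω : ℕ → Bool) : 0 ≤ trueCount N ω := Nat.cast_nonneg _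

lemma monotone_trueCount (ω : ℕ → Bool) : Monotone fun N => trueCount N ω := fun _ _ h =>
  Nat.cast_le.2 (card_le_card (filter_subset_filter _ (range_subset_range.2 h)))

lemma memLp_trueIndicator (μ : Measure (ℕ → Bool)) [IsFiniteMeasure μ] (n : ℕ) (p : ℝ≥0∞) :
    MemLp (trueIndicator n) p μ :=
  (memLp_const 1).indicator (measurableSet_apply_eq_true n)

namespace IsBernoulliProduct

variable {μ : Measure (ℕ → Bool)} {α : ℕ → ℝ}

lemma measure_apply_eq_true (hμ : IsBernoulliProduct μ α) (n : ℕ) :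
    μ {ω | ω n = true} = ENNReal.ofReal (α n) := by
  simpa using hμ.2 {n} fun _ => true

lemma iIndepSet_apply_eq_true (hμ : IsBernoulliProduct μ α) :
    iIndepSet (fun n => {ω : ℕ → Bool | ω n = true}) μ := by
  refine (iIndepSet_iff_meas_biInter measurableSet_apply_eq_true).2 fun s => ?_
  simp_rw [hμ.measure_apply_eq_true]
  convert hμ.2 s fun _ => true using 2
  · ext ω
    simp
  · simp

lemma integral_trueIndicator (hμ : IsBernoulliProduct μ α) (h0 : ∀ n, 0 ≤ α n) (n : ℕ) :
    μ[trueIndicator n] = α n := by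
  rw [trueIndicator, integral_indicator_const _ (measurableSet_apply_eq_true n), measureReal_def,
    hμ.measure_apply_eq_true, ENNReal.toReal_ofReal (h0 n), smul_eq_mul, mul_one]

lemma variance_trueIndicator_le (hμ : IsBernoulliProduct μ α) (h0 : ∀ n, 0 ≤ α n) (n : ℕ) :
    variance (trueIndicator n) μ ≤ α n := by
  have := hμ.1
  have hsq : trueIndicator n ^ 2 = trueIndicator n := by
    ext ω
    by_cases h : ω n = true <;> simp [trueIndicator, h]
  calc variance (trueIndicator n) μ ≤ μ[trueIndicator n ^ 2] :=
        variance_le_expectation_sq (memLp_trueIndicator μ n 1).1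
    _ = α n := by rw [hsq, hμ.integral_trueIndicator h0]

lemma integral_trueCount (hμ : IsBernoulliProduct μ α) (h0 : ∀ n, 0 ≤ α n) (N : ℕ) :
    μ[trueCount N] = ∑ n ∈ range N, α n := by
  have := hμ.1
  simp only [trueCount_eq_sum, Finset.sum_apply]
  rw [integral_finsetSum _ fun n _ => (memLp_trueIndicator μ n 1).integrable le_rfl]
  exact sum_congr rfl fun n _ => hμ.integral_trueIndicator h0 n

lemma variance_trueCount_le (hμ : IsBernoulliProduct μ α) (h0 : ∀ n, 0 ≤ α n) (N : ℕ) :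
    variance (trueCount N) μ ≤ ∑ n ∈ range N, α n := by
  have := hμ.1
  rw [trueCount_eq_sum, IndepFun.variance_sum (fun n _ => memLp_trueIndicator μ n 2)
    fun i _ j _ hij => hμ.iIndepSet_apply_eq_true.iIndepFun_indicator.indepFun hij]
  exact sum_le_sum fun n _ => hμ.variance_trueIndicator_le h0 n

lemma memLp_trueCount [IsFiniteMeasure μ] (N : ℕ) (p : ℝ≥0∞) : MemLp (trueCount N) p μ :=
  trueCount_eq_sum N ▸ memLp_finsetSum' _ fun n _ => memLp_trueIndicator μ n p

lemma ae_tendsto_trueCount_div_of_sq_le (hμ : IsBernoulliProduct μ α) (h0 : ∀ n, 0 ≤ α n)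
    {N : ℕ → ℕ} (hN : ∀ k : ℕ, ((k : ℝ) + 1) ^ 2 ≤ ∑ n ∈ range (N k), α n) :
    ∀ᵐ ω ∂μ, Tendsto (fun k => trueCount (N k) ω / ∑ n ∈ range (N k), α n) atTop (𝓝 1) := by
  have := hμ.1
  have hpos k : 0 < ∑ n ∈ range (N k), α n := lt_of_lt_of_le (by positivity) (hN k)
  have hsum : Summable fun k => variance (trueCount (N k)) μ / μ[trueCount (N k)] ^ 2 := by
    have hsq : Summable fun k : ℕ => 1 / ((k : ℝ) + 1) ^ 2 := by
      simpa using (summable_nat_add_iff 1).2 (Real.summable_one_div_nat_pow.2 one_lt_two)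
    refine hsq.of_nonneg_of_le (fun k => div_nonneg (variance_nonneg _ _) (sq_nonneg _))
      fun k => ?_
    rw [hμ.integral_trueCount h0]
    calc variance (trueCount (N k)) μ / (∑ n ∈ range (N k), α n) ^ 2
        ≤ (∑ n ∈ range (N k), α n) / (∑ n ∈ range (N k), α n) ^ 2 := by
          gcongr; exact hμ.variance_trueCount_le h0 _
      _ = 1 / ∑ n ∈ range (N k), α n := by field_simp
      _ ≤ 1 / ((k : ℝ) + 1) ^ 2 := by gcongr; exact hN k
  simpa only [hμ.integral_trueCount h0] using ae_tendsto_div_integral_of_summable_variance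
    (fun k => memLp_trueCount (N k) 2) (fun k => hμ.integral_trueCount h0 _ ▸ hpos k) hsum

end IsBernoulliProduct

theorem stmt_1 (α : ℕ → ℝ) (h0 : ∀ n, 0 ≤ α n) (h1 : ∀ n, α n ≤ 1)
    (hdiv : Tendsto (fun N : ℕ => ∑ n ∈ Finset.range N, α n) atTop atTop)
    (μ : Measure (ℕ → Bool)) (hμ : IsBernoulliProduct μ α) :
    ∀ᵐ ω ∂μ, Tendsto (fun x : ℕ =>
        ((((Finset.range (x + 1)).filter (fun n => ω n = true)).card : ℝ) /
          ∑ n ∈ Finset.range (x + 1), α n))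
      atTop (nhds 1) := by
  have hA : Monotone fun N : ℕ => ∑ n ∈ range N, α n :=
    monotone_nat_of_le_succ fun n => by simpa [sum_range_succ] using h0 n
  obtain ⟨N, hN, hN_sq, hratio⟩ := exists_strictMono_sq_le_tendsto_div hA (by simp)
    (fun n => by simpa [sum_range_succ] using h1 n) hdiv
  filter_upwards [hμ.ae_tendsto_trueCount_div_of_sq_le h0 hN_sq] with ω hω
  exact (tendsto_add_atTop_iff_nat 1).2 <| tendsto_div_of_monotone_of_tendsto_div_subseq
    (monotone_trueCount ω) (trueCount_nonneg · ω) hA hN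
    (fun k => lt_of_lt_of_le (by positivity) (hN_sq k)) hratio hω
end

section
/- Let 𝒜 ⊆ ℕ be any set, h ≥ 1 an integer, n ∈ ℕ and k ∈ ℕ. Then r_{𝒜,h}(n) ≤ r_{𝒜∪{k},h}(n) ≤ r_{𝒜,h}(n) + C(h, ⌊h/2⌋)·∑_{ℓ=1}^{h−1} r_{𝒜,h−ℓ}(n − ℓk) + δ_{n/h}(k), where C(h, ⌊h/2⌋) is the binomial coefficient 'h choose ⌊h/2⌋', δ_{n/h}(k) = 1 if h·k = n and 0 otherwise, and r_{𝒜,j}(m) := 0 when m < 0. -/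
open Filter Asymptotics

noncomputable def rA (A : Set ℕ) (h n : ℕ) : ℕ :=
  {t : Fin h → ℕ | (∀ i, t i ∈ A) ∧ ∑ i, t i = n}.ncard

/-!
A tuple with entries in `A ∪ {k}` is determined by the set `S` of positions where its entry
lies outside `A` (there it equals `k`) together with its restriction to the complement of `S`,
an `(h - |S|)`-tuple from `A` summing to `n - |S| k`. Grouping the sets `S` by size `ℓ` gives
`C(h, ℓ) ≤ C(h, ⌊h/2⌋)` choices for `0 < ℓ < h`; `ℓ = 0` gives the tuples from `A`, and `ℓ = h`
only the constant tuple `(k, …, k)`, which sums to `n` exactly when `h k = n`.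
-/

open Finset

open scoped Classical in
noncomputable def tuplesIn (A : Set ℕ) (h n : ℕ) : Finset (Fin h → ℕ) :=
  (Nat.antidiagonalTuple h n).filter fun t => ∀ i, t i ∈ A

lemma mem_tuplesIn {A : Set ℕ} {h n : ℕ} {t : Fin h → ℕ} :
    t ∈ tuplesIn A h n ↔ (∀ i, t i ∈ A) ∧ ∑ i, t i = n := by
  simp [tuplesIn, Nat.mem_antidiagonalTuple, and_comm]

lemma rA_eq_card_tuplesIn (A : Set ℕ) (h n : ℕ) : rA A h n = #(tuplesIn A h n) := by
  rw [rA, ← Set.ncard_coe_finset]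
  congr 1
  ext t
  simp [mem_tuplesIn]

lemma rA_mono {A B : Set ℕ} (hAB : A ⊆ B) (h n : ℕ) : rA A h n ≤ rA B h n := by
  simp only [rA_eq_card_tuplesIn]
  refine card_le_card fun t ht => ?_
  rw [mem_tuplesIn] at ht ⊢
  exact ⟨fun i => hAB (ht.1 i), ht.2⟩

lemma rA_zero (A : Set ℕ) (n : ℕ) : rA A 0 n = if n = 0 then 1 else 0 := by
  rw [rA]
  split_ifs with hn <;> simp [hn, eq_comm]

open scoped Classical in
noncomputable def tuplesConstOn (A : Set ℕ) (k : ℕ) {h : ℕ} (n : ℕ) (S : Finset (Fin h)) :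
    Finset (Fin h → ℕ) :=
  (Nat.antidiagonalTuple h n).filter fun t => (∀ i ∈ S, t i = k) ∧ ∀ i ∉ S, t i ∈ A

lemma card_tuplesConstOn_le (A : Set ℕ) (k : ℕ) {h : ℕ} (n : ℕ) (S : Finset (Fin h)) :
    #(tuplesConstOn A k n S) ≤
      if #S * k ≤ n then rA A (h - #S) (n - #S * k) else 0 := by
  classical
  have sum_on_S : ∀ t ∈ tuplesConstOn A k n S, ∑ i ∈ S, t i = #S * k := fun t ht => by
    rw [tuplesConstOn, mem_filter] at ht
    rw [sum_congr rfl ht.2.1, sum_const, smul_eq_mul]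
  split_ifs with hS
  · set e := Sᶜ.orderIsoOfFin (k := h - #S) (by simp [card_compl])
    rw [rA_eq_card_tuplesIn]
    refine card_le_card_of_injOn (fun t j => t (e j)) (fun t ht => ?_)
      (fun t₁ ht₁ t₂ ht₂ heq => ?_)
    · have hS := sum_on_S t ht
      simp only [coe_filter, tuplesConstOn, Nat.mem_antidiagonalTuple, Set.mem_ofPred_eq] at ht
      rw [mem_coe, mem_tuplesIn]
      refine ⟨fun j => ht.2.2 _ (mem_compl.mp (e j).2), ?_⟩
      rw [show ∑ j, t (e j) = ∑ i ∈ Sᶜ, t i from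
        (e.toEquiv.sum_comp (fun i : (Sᶜ : Finset _) => t i)).trans (sum_coe_sort Sᶜ t)]
      have := sum_add_sum_compl S t
      omega
    · simp only [tuplesConstOn, coe_filter, Set.mem_ofPred_eq] at ht₁ ht₂
      funext i
      by_cases hi : i ∈ S
      · rw [ht₁.2.1 i hi, ht₂.2.1 i hi]
      · simpa using congrFun heq (e.symm ⟨i, mem_compl.mpr hi⟩)
  · refine (card_eq_zero.mpr (eq_empty_of_forall_notMem fun t ht => hS ?_)).le
    rw [← sum_on_S t ht]
    simp only [tuplesConstOn, mem_filter, Nat.mem_antidiagonalTuple] at ht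
    exact ht.1 ▸ sum_le_sum_of_subset (subset_univ S)

lemma tuplesIn_union_singleton_subset (A : Set ℕ) (h n k : ℕ) :
    tuplesIn (A ∪ {k}) h n ⊆ (univ : Finset (Fin h)).powerset.biUnion (tuplesConstOn A k n) := by
  classical
  intro t ht
  rw [mem_tuplesIn] at ht
  simp only [mem_biUnion, mem_powerset, subset_univ, true_and]
  refine ⟨univ.filter fun i => t i ∉ A, ?_⟩
  simp only [tuplesConstOn, mem_filter, Nat.mem_antidiagonalTuple, mem_univ, true_and, not_not]
  exact ⟨ht.2, fun i hi => (ht.1 i).resolve_left hi, fun i hi => hi⟩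

lemma rA_union_singleton_le_sum_choose (A : Set ℕ) (h n k : ℕ) :
    rA (A ∪ {k}) h n ≤ ∑ ℓ ∈ range (h + 1),
      h.choose ℓ * if ℓ * k ≤ n then rA A (h - ℓ) (n - ℓ * k) else 0 := by
  classical
  calc rA (A ∪ {k}) h n
      ≤ ∑ S ∈ (univ : Finset (Fin h)).powerset, #(tuplesConstOn A k n S) := by
        rw [rA_eq_card_tuplesIn]
        exact (card_le_card (tuplesIn_union_singleton_subset A h n k)).trans card_biUnion_le
    _ ≤ ∑ S ∈ (univ : Finset (Fin h)).powerset,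
          if #S * k ≤ n then rA A (h - #S) (n - #S * k) else 0 :=
        sum_le_sum fun S _ => card_tuplesConstOn_le A k n S
    _ = _ := by
        rw [sum_powerset_apply_card fun ℓ => if ℓ * k ≤ n then rA A (h - ℓ) (n - ℓ * k) else 0,
          card_univ, Fintype.card_fin]
        rfl

lemma sum_range_choose_mul_le (f : ℕ → ℕ) {h : ℕ} (hh : 1 ≤ h) :
    ∑ ℓ ∈ range (h + 1), h.choose ℓ * f ℓ ≤
      f 0 + h.choose (h / 2) * ∑ ℓ ∈ Icc 1 (h - 1), f ℓ + f h := by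
  have middle : Ico 1 h = Icc 1 (h - 1) := by ext; simp; omega
  rw [sum_range_succ, range_eq_Ico, sum_eq_sum_Ico_succ_bot hh, middle, Nat.choose_self,
    Nat.choose_zero_right, one_mul, one_mul, mul_sum]
  gcongr
  exact Nat.choose_le_middle _ h

theorem stmt_2 (A : Set ℕ) (h : ℕ) (hh : 1 ≤ h) (n k : ℕ) :
    rA A h n ≤ rA (A ∪ {k}) h n ∧
    rA (A ∪ {k}) h n ≤ rA A h n +
      (h.choose (h / 2)) * (∑ ℓ ∈ Finset.Icc 1 (h - 1),
        if ℓ * k ≤ n then rA A (h - ℓ) (n - ℓ * k) else 0) +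
      (if h * k = n then 1 else 0) := by
  refine ⟨rA_mono Set.subset_union_left h n, ?_⟩
  have top : (if h * k ≤ n then rA A (h - h) (n - h * k) else 0) = if h * k = n then 1 else 0 := by
    simp only [Nat.sub_self, rA_zero]
    split_ifs <;> omega
  calc rA (A ∪ {k}) h n ≤ _ := rA_union_singleton_le_sum_choose A h n k
    _ ≤ _ := sum_range_choose_mul_le _ hh
    _ = _ := by rw [top]; simp
end

section
/- Let 𝒜 ⊆ ℕ be an OR₊ sequence. In the space 𝒮_𝒜, for every integer h ≥ 1 one has 𝔼(r_{ω,h}(n)) = Θ(A(n)^h / n) as n → ∞. -/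
open Filter Asymptotics MeasureTheory

/-- Counting function `A(x) = |𝒜 ∩ [0,x]|`. -/
noncomputable def cntA (A : Set ℕ) (x : ℝ) : ℕ :=
  {n : ℕ | n ∈ A ∧ (n : ℝ) ≤ x}.ncard

/-- The increasing enumeration `a₀ < a₁ < ⋯` of a set `A ⊆ ℕ`. -/
noncomputable def seqA (A : Set ℕ) (n : ℕ) : ℕ := Nat.nth (· ∈ A) n

/-- `A` is an OR sequence: `A(2x) = O(A(x))`. -/
def ORseq (A : Set ℕ) : Prop :=
  (fun x : ℝ => (cntA A (2 * x) : ℝ)) =O[atTop] (fun x : ℝ => (cntA A x : ℝ))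

/-- `A` is a PI sequence: `a_{2n} = O(a_n)`. -/
def PIseq (A : Set ℕ) : Prop :=
  (fun n : ℕ => (seqA A (2 * n) : ℝ)) =O[atTop] (fun n : ℕ => (seqA A n : ℝ))

/-- `A` is an OR₊ sequence: an infinite subset of ℕ that is both OR and PI. -/
def ORplus (A : Set ℕ) : Prop := A.Infinite ∧ ORseq A ∧ PIseq A

section Aux
open Finset

open scoped Classical in
lemma cntA_eq_count (A : Set ℕ) (N : ℕ) :
    cntA A (N : ℝ) = Nat.count (· ∈ A) (N + 1) := by
  classical
  rw [Nat.count_eq_card_filter_range, cntA]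
  rw [show {n : ℕ | n ∈ A ∧ (n : ℝ) ≤ (N : ℝ)} = ↑({x ∈ Finset.range (N+1) | x ∈ A}) by
    ext k; simp [Nat.lt_succ_iff, and_comm, Nat.cast_le]]
  rw [Set.ncard_coe_finset]

lemma cntA_mono (A : Set ℕ) : Monotone (cntA A) := by
  intro x y hxy
  have hfin : {n : ℕ | n ∈ A ∧ (n : ℝ) ≤ y}.Finite := by
    apply (Set.finite_le_nat ⌊y⌋₊).subset
    intro n hn
    exact Nat.le_floor hn.2
  exact Set.ncard_le_ncard (fun n hn => ⟨hn.1, hn.2.trans hxy⟩) hfin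

lemma cntA_le_succ (A : Set ℕ) (N : ℕ) : cntA A (N : ℝ) ≤ N + 1 := by
  classical
  rw [cntA_eq_count, Nat.count_eq_card_filter_range]
  exact (Finset.card_filter_le _ _).trans (by simp)

lemma seqA_le_iff (A : Set ℕ) (hinf : A.Infinite) (m N : ℕ) :
    seqA A m ≤ N ↔ m < cntA A (N : ℝ) := by
  classical
  have hinf' : (setOf (· ∈ A)).Infinite := by exact hinf
  rw [cntA_eq_count, seqA, Nat.lt_nth_iff_count_lt hinf', Nat.lt_succ_iff]

lemma cntA_tendsto (A : Set ℕ) (hinf : A.Infinite) :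
    Tendsto (fun n : ℕ => cntA A (n : ℝ)) atTop atTop := by
  rw [tendsto_atTop_atTop]
  intro b
  exact ⟨seqA A b, fun n hn => ((seqA_le_iff A hinf b n).1 hn).le⟩

lemma or_const (A : Set ℕ) (hOR : ORseq A) :
    ∃ C : ℝ, 1 ≤ C ∧ ∀ᶠ x : ℝ in atTop, (cntA A (2 * x) : ℝ) ≤ C * cntA A x := by
  obtain ⟨C, hC⟩ := hOR.bound
  refine ⟨max C 1, le_max_right _ _, ?_⟩
  filter_upwards [hC] with x hx
  calc (cntA A (2*x) : ℝ) = ‖(cntA A (2*x) : ℝ)‖ := by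
        rw [Real.norm_eq_abs, abs_of_nonneg (by positivity)]
    _ ≤ C * ‖(cntA A x : ℝ)‖ := hx
    _ ≤ max C 1 * (cntA A x) := by
        rw [Real.norm_eq_abs, abs_of_nonneg (by positivity)]
        exact mul_le_mul_of_nonneg_right (le_max_left _ _) (by positivity)

lemma or_iter (A : Set ℕ) {C : ℝ} (hC1 : 1 ≤ C)
    (hC : ∀ᶠ x : ℝ in atTop, (cntA A (2 * x) : ℝ) ≤ C * cntA A x) (j : ℕ) :
    ∀ᶠ x : ℝ in atTop, (cntA A x : ℝ) ≤ C ^ j * cntA A (x / 2 ^ j) := by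
  induction j with
  | zero => filter_upwards with x; simp
  | succ j ih =>
    have h1 : ∀ᶠ x : ℝ in atTop, (cntA A x : ℝ) ≤ C * cntA A (x / 2) := by
      have := (tendsto_id.atTop_div_const (by norm_num : (0:ℝ) < 2)).eventually hC
      filter_upwards [this] with x hx
      simpa [mul_div_cancel₀] using hx
    have h2 : ∀ᶠ x : ℝ in atTop,
        (cntA A (x / 2) : ℝ) ≤ C ^ j * cntA A (x / 2 / 2 ^ j) := by
      exact (tendsto_id.atTop_div_const (by norm_num : (0:ℝ) < 2)).eventually ih
    filter_upwards [h1, h2] with x hx1 hx2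
    calc (cntA A x : ℝ) ≤ C * cntA A (x / 2) := hx1
      _ ≤ C * (C ^ j * cntA A (x / 2 / 2 ^ j)) :=
          mul_le_mul_of_nonneg_left hx2 (by linarith)
      _ = C ^ (j+1) * cntA A (x / 2 ^ (j+1)) := by
          rw [div_div, ← pow_succ']; ring_nf
lemma pi_const (A : Set ℕ) (hPI : PIseq A) :
    ∃ K : ℕ, 2 ≤ K ∧ ∀ᶠ m : ℕ in atTop, seqA A (2 * m) ≤ K * seqA A m := by
  obtain ⟨c, hc⟩ := hPI.bound
  refine ⟨max 2 ⌈c⌉₊, le_max_left _ _, ?_⟩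
  filter_upwards [hc] with m hm
  have h1 : (seqA A (2*m) : ℝ) ≤ c * seqA A m := by
    rw [Real.norm_eq_abs, abs_of_nonneg (by positivity),
      Real.norm_eq_abs, abs_of_nonneg (by positivity)] at hm
    exact hm
  have h2 : c * (seqA A m : ℝ) ≤ (max 2 ⌈c⌉₊ : ℕ) * seqA A m := by
    apply mul_le_mul_of_nonneg_right _ (by positivity)
    calc c ≤ ⌈c⌉₊ := Nat.le_ceil c
      _ ≤ (max 2 ⌈c⌉₊ : ℕ) := by exact_mod_cast Nat.cast_le.2 (le_max_right _ _)
  exact_mod_cast h1.trans h2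

lemma doubling (A : Set ℕ) (hinf : A.Infinite) {K M₀ : ℕ}
    (hK : ∀ m ≥ M₀, seqA A (2 * m) ≤ K * seqA A m) :
    ∃ N₀ : ℕ, 2 ≤ cntA A (N₀ : ℝ) ∧
      ∀ N ≥ N₀, 2 * cntA A (N : ℝ) ≤ cntA A ((K * N : ℕ) : ℝ) + 1 := by
  obtain ⟨N₀, hN₀⟩ := (cntA_tendsto A hinf).eventually_ge_atTop (M₀ + 2) |>.exists_forall_of_atTop
  refine ⟨N₀, le_trans (by omega) (hN₀ N₀ le_rfl), fun N hN => ?_⟩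
  have hcnt : M₀ + 2 ≤ cntA A (N : ℝ) := hN₀ N hN
  set m := cntA A (N : ℝ) - 1 with hm
  have hmM : M₀ ≤ m := by omega
  have ham : seqA A m ≤ N := (seqA_le_iff A hinf m N).2 (by omega)
  have h2m : seqA A (2 * m) ≤ K * N :=
    (hK m hmM).trans (Nat.mul_le_mul_left K ham)
  have : 2 * m < cntA A ((K * N : ℕ) : ℝ) := (seqA_le_iff A hinf _ _).1 h2m
  omega

lemma sum_alpha_le (A : Set ℕ) (hinf : A.Infinite) {K N₀ : ℕ} (hK2 : 2 ≤ K)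
    (hN₀2 : 2 ≤ cntA A (N₀ : ℝ))
    (hdb : ∀ N ≥ N₀, 2 * cntA A (N : ℝ) ≤ cntA A ((K * N : ℕ) : ℝ) + 1) :
    ∃ D : ℝ, ∀ n : ℕ, ∑ k ∈ Finset.range (n+1), (cntA A (k:ℝ) : ℝ) / ((k:ℝ)+1)
      ≤ 6 * K * cntA A (n : ℝ) + D := by
  set αf : ℕ → ℝ := fun k => (cntA A (k:ℝ) : ℝ) / ((k:ℝ)+1) with hαf
  have hα0 : ∀ k, 0 ≤ αf k := fun k => by positivity
  set N₁ := K * (N₀ + 1) with hN₁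
  refine ⟨∑ k ∈ Finset.range (N₁+1), αf k, fun n => ?_⟩
  induction n using Nat.strong_induction_on with
  | _ n ih =>
    rcases le_or_gt n N₁ with hn | hn
    · have : ∑ k ∈ Finset.range (n+1), αf k ≤ ∑ k ∈ Finset.range (N₁+1), αf k :=
        Finset.sum_le_sum_of_subset_of_nonneg
          (Finset.range_subset_range.2 (by omega)) (fun k _ _ => hα0 k)
      have h0 : (0:ℝ) ≤ 6 * K * cntA A (n:ℝ) := by positivity
      linarith
    · -- n > N₁
      set n' := n / K with hn'
      have hK0 : 0 < K := by omega
      have hn'N₀ : N₀ + 1 ≤ n' := by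
        rw [hn', Nat.le_div_iff_mul_le hK0]
        calc (N₀+1) * K = K * (N₀+1) := Nat.mul_comm _ _
          _ ≤ n := by omega
      have hKn'n : K * n' ≤ n := by rw [hn', Nat.mul_comm]; exact Nat.div_mul_le_self n K
      have hn'n : n' < n := Nat.div_lt_self (by omega) (by omega)
      have hsplit : ∑ k ∈ Finset.range (n+1), αf k
          = ∑ k ∈ Finset.range (n'+1), αf k + ∑ k ∈ Finset.Ico (n'+1) (n+1), αf k := by
        rw [Finset.sum_range_add_sum_Ico _ (by omega)]
      -- bound Ico part
      have hIco : ∑ k ∈ Finset.Ico (n'+1) (n+1), αf k ≤ K * cntA A (n:ℝ) := by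
        have hb : ∀ k ∈ Finset.Ico (n'+1) (n+1),
            αf k ≤ (cntA A (n:ℝ) : ℝ) / ((n':ℝ)+1) := by
          intro k hk
          rw [Finset.mem_Ico] at hk
          apply div_le_div₀ (by positivity)
            (by exact_mod_cast cntA_mono A (by exact_mod_cast Nat.cast_le.2 (by omega)))
            (by positivity)
          push_cast; have : (n':ℝ) + 1 ≤ k := by exact_mod_cast Nat.cast_le.2 hk.1
          linarith
        calc ∑ k ∈ Finset.Ico (n'+1) (n+1), αf k
            ≤ (Finset.Ico (n'+1) (n+1)).card • ((cntA A (n:ℝ) : ℝ) / ((n':ℝ)+1)) :=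
              Finset.sum_le_card_nsmul _ _ _ hb
          _ = ((n - n' : ℕ) : ℝ) * ((cntA A (n:ℝ) : ℝ) / ((n':ℝ)+1)) := by
              rw [Nat.card_Ico, nsmul_eq_mul]; congr 2; omega
          _ ≤ K * cntA A (n:ℝ) := by
              have h1 : ((n - n' : ℕ) : ℝ) ≤ K * ((n':ℝ)+1) := by
                have : n - n' ≤ K * (n' + 1) := by
                  have : n < K * (n' + 1) := by
                    have := Nat.lt_div_mul_add hK0 (a := n)
                    calc n < n / K * K + K := this
                      _ = K * (n/K + 1) := by ring
                  omega
                exact_mod_cast this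
              have hpos : (0:ℝ) < (n':ℝ) + 1 := by positivity
              rw [mul_comm ((n-n':ℕ):ℝ) _, div_mul_eq_mul_div, div_le_iff₀ hpos]
              calc (cntA A (n:ℝ) : ℝ) * ((n-n':ℕ):ℝ)
                  ≤ (cntA A (n:ℝ) : ℝ) * (K * ((n':ℝ)+1)) :=
                    mul_le_mul_of_nonneg_left h1 (by positivity)
                _ = K * (cntA A (n:ℝ)) * ((n':ℝ)+1) := by ring
      -- doubling at n'
      have hdbl : 2 * cntA A ((n':ℕ) : ℝ) ≤ cntA A (n : ℝ) + 1 := by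
        have h1 := hdb n' (by omega)
        have h2 : cntA A ((K * n' : ℕ) : ℝ) ≤ cntA A (n : ℝ) :=
          cntA_mono A (by exact_mod_cast Nat.cast_le.2 hKn'n)
        omega
      have hc2 : 2 ≤ cntA A (n : ℝ) := by
        have : cntA A ((N₀:ℕ) : ℝ) ≤ cntA A (n : ℝ) :=
          cntA_mono A (by exact_mod_cast Nat.cast_le.2 (by omega : N₀ ≤ n))
        omega
      have hIH := ih n' hn'n
      have hdblR : (cntA A ((n':ℕ):ℝ) : ℝ) ≤ ((cntA A (n:ℝ) : ℝ) + 1) / 2 := by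
        have : (2 * cntA A ((n':ℕ) : ℝ) : ℝ) ≤ (cntA A (n : ℝ) : ℝ) + 1 := by
          exact_mod_cast hdbl
        linarith
      have hc2R : (2:ℝ) ≤ cntA A (n:ℝ) := by exact_mod_cast hc2
      have hKR : (2:ℝ) ≤ (K:ℝ) := by exact_mod_cast hK2
      rw [hsplit]
      nlinarith [hIH, hIco, hdblR, hc2R, hKR]

lemma rA_eq_card (S : Set ℕ) [DecidablePred (· ∈ S)] (h n : ℕ) :
    rA S h n = (((Fintype.piFinset fun _ : Fin h => Finset.range (n+1)).filter
      (fun t => ∑ i, t i = n)).filter (fun t => ∀ i, t i ∈ S)).card := by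
  rw [rA, ← Set.ncard_coe_finset]
  congr 1
  ext t
  simp only [Finset.coe_filter, Fintype.mem_piFinset, Finset.mem_range, Set.mem_setOf_eq,
    Set.mem_sep_iff, Finset.mem_filter]
  constructor
  · rintro ⟨h1, h2⟩
    refine ⟨⟨fun i => ?_, h2⟩, h1⟩
    have : t i ≤ ∑ j, t j := Finset.single_le_sum (fun j _ => Nat.zero_le _) (Finset.mem_univ i)
    omega
  · rintro ⟨⟨h1, h2⟩, h3⟩
    exact ⟨h3, h2⟩

lemma bool_measurable (s : Set Bool) : MeasurableSet s := trivial

lemma integral_rA (A : Set ℕ) (h n : ℕ) (μ : Measure (ℕ → Bool))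
    (hμ : IsBernoulliProduct μ (fun n => (cntA A n : ℝ) / (n + 1))) :
    ∫ ω, (rA {m | ω m = true} h n : ℝ) ∂μ
      = ∑ t ∈ (Fintype.piFinset fun _ : Fin h => Finset.range (n+1)).filter
          (fun t => ∑ i, t i = n),
        ∏ m ∈ Finset.image t Finset.univ, ((cntA A (m:ℝ) : ℝ) / ((m:ℝ) + 1)) := by
  classical
  haveI : IsProbabilityMeasure μ := hμ.1
  set Tn := (Fintype.piFinset fun _ : Fin h => Finset.range (n+1)).filter
      (fun t => ∑ i, t i = n) with hTn
  have hmeas : ∀ t : Fin h → ℕ, MeasurableSet {ω : ℕ → Bool | ∀ i, ω (t i) = true} := by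
    intro t
    have : {ω : ℕ → Bool | ∀ i, ω (t i) = true}
        = ⋂ i, (fun ω : ℕ → Bool => ω (t i)) ⁻¹' {true} := by
      ext ω; simp
    rw [this]
    exact MeasurableSet.iInter fun i => (measurable_pi_apply (t i)) (bool_measurable _)
  have hpt : ∀ ω : ℕ → Bool, (rA {m | ω m = true} h n : ℝ)
      = ∑ t ∈ Tn, Set.indicator {ω' : ℕ → Bool | ∀ i, ω' (t i) = true} (fun _ => (1:ℝ)) ω := by
    intro ω
    rw [rA_eq_card _ h n, Finset.card_filter]
    push_cast
    apply Finset.sum_congr rfl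
    intro t _
    by_cases hc : ∀ i, ω (t i) = true
    · rw [if_pos (by simpa using hc), Set.indicator_of_mem (by simpa using hc)]
    · rw [if_neg (by simpa using hc), Set.indicator_of_notMem (by simpa using hc)]
  have hfun : (fun ω => (rA {m | ω m = true} h n : ℝ))
      = fun ω => ∑ t ∈ Tn, Set.indicator {ω' : ℕ → Bool | ∀ i, ω' (t i) = true}
          (fun _ => (1:ℝ)) ω := funext hpt
  rw [hfun, MeasureTheory.integral_finset_sum]
  · apply Finset.sum_congr rfl
    intro t _
    have h1 : ∫ ω, Set.indicator {ω' : ℕ → Bool | ∀ i, ω' (t i) = true} (fun _ => (1:ℝ)) ω ∂μ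
        = (μ {ω' : ℕ → Bool | ∀ i, ω' (t i) = true}).toReal := by
      rw [show (fun _ : ℕ → Bool => (1:ℝ)) = (1 : (ℕ → Bool) → ℝ) from rfl]
      exact MeasureTheory.integral_indicator_one (hmeas t)
    rw [h1]
    have h2 : {ω' : ℕ → Bool | ∀ i, ω' (t i) = true}
        = {ω' : ℕ → Bool | ∀ m ∈ Finset.image t Finset.univ, ω' m = true} := by
      ext ω'; simp
    rw [h2, hμ.2 (Finset.image t Finset.univ) (fun _ => true)]
    rw [ENNReal.toReal_prod]
    apply Finset.prod_congr rfl
    intro m _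
    rw [if_pos rfl, ENNReal.toReal_ofReal (by positivity)]
  · intro t _
    exact (MeasureTheory.integrable_const (1:ℝ)).indicator (hmeas t)

lemma prod_image_ge (h : ℕ) (β : ℕ → ℝ) (hβ : ∀ k, 0 ≤ β k ∧ β k ≤ 1) (t : Fin h → ℕ) :
    ∏ i, β (t i) ≤ ∏ m ∈ Finset.image t Finset.univ, β m := by
  classical
  rw [← Finset.prod_fiberwise_of_maps_to
    (fun i _ => Finset.mem_image_of_mem t (Finset.mem_univ i)) (fun i => β (t i))]
  apply Finset.prod_le_prod
  · intro m _
    exact Finset.prod_nonneg fun i _ => (hβ _).1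
  · intro m hm
    obtain ⟨i, _, hi⟩ := Finset.mem_image.1 hm
    have hcongr : ∏ j ∈ Finset.univ.filter (fun j => t j = m), β (t j)
        = β m ^ (Finset.univ.filter (fun j => t j = m)).card := by
      rw [Finset.prod_congr rfl (fun j hj => by rw [(Finset.mem_filter.1 hj).2]),
        Finset.prod_const]
    rw [hcongr]
    have hc1 : 1 ≤ (Finset.univ.filter (fun j => t j = m)).card := by
      refine Finset.card_pos.2 ⟨i, ?_⟩
      simp [hi]
    calc β m ^ (Finset.univ.filter (fun j => t j = m)).card ≤ β m ^ 1 :=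
          pow_le_pow_of_le_one (hβ m).1 (hβ m).2 hc1
      _ = β m := pow_one _

set_option maxHeartbeats 1000000 in
lemma lower_sum (h' n : ℕ) (β : ℕ → ℝ) (hβ : ∀ k, 0 ≤ β k ∧ β k ≤ 1)
    (L : ℕ) (hL : 2 * (h' + 1) * L ≤ n) (bL : ℝ) (hbL0 : 0 ≤ bL)
    (hbL : ∀ k, L ≤ k → k ≤ n → bL ≤ β k) :
    (L : ℝ) ^ h' * bL ^ (h' + 1) ≤
      ∑ t ∈ (Fintype.piFinset fun _ : Fin (h'+1) => Finset.range (n+1)).filter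
          (fun t => ∑ i, t i = n),
        ∏ m ∈ Finset.image t Finset.univ, β m := by
  classical
  set Tn := (Fintype.piFinset fun _ : Fin (h'+1) => Finset.range (n+1)).filter
      (fun t => ∑ i, t i = n) with hTn
  set D := Fintype.piFinset (fun i : Fin (h'+1) =>
    if (i:ℕ) < h' then Finset.Ioc L (2*L) else {0}) with hD
  set Ψ : (Fin (h'+1) → ℕ) → (Fin (h'+1) → ℕ) :=
    fun v i => if (i:ℕ) < h' then v i else n - ∑ j, v j with hΨ
  have h2L : 2 * L * h' + 2 * L ≤ n := by
    have : 2 * L * h' + 2 * L = 2 * (h' + 1) * L := by ring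
    omega
  have hmemD : ∀ v ∈ D, (∀ i : Fin (h'+1), (i:ℕ) < h' → v i ∈ Finset.Ioc L (2*L))
      ∧ (∀ i : Fin (h'+1), ¬ (i:ℕ) < h' → v i = 0) := by
    intro v hv
    rw [hD, Fintype.mem_piFinset] at hv
    constructor
    · intro i hi; have := hv i; rwa [if_pos hi] at this
    · intro i hi; have := hv i; rw [if_neg hi] at this; simpa using this
  have hsumv : ∀ v ∈ D, ∑ j, v j ≤ 2 * L * h' := by
    intro v hv
    obtain ⟨h1, h2⟩ := hmemD v hv
    calc ∑ j, v j ≤ ∑ j : Fin (h'+1), (if (j:ℕ) < h' then 2*L else 0) := by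
          apply Finset.sum_le_sum
          intro j _
          by_cases hj : (j:ℕ) < h'
          · rw [if_pos hj]; exact (Finset.mem_Ioc.1 (h1 j hj)).2
          · rw [if_neg hj, h2 j hj]
      _ = 2 * L * h' := by
          rw [Fin.sum_univ_castSucc]
          simp only [Fin.coe_castSucc, Fin.is_lt, if_pos, Fin.val_last, lt_self_iff_false,
            if_neg, not_false_iff]
          rw [Finset.sum_const, Finset.card_univ, Fintype.card_fin]
          simp [Nat.mul_comm]
  have hsumΨ : ∀ v ∈ D, ∑ i, Ψ v i = n := by
    intro v hv
    have hvle : ∑ j, v j ≤ n := (hsumv v hv).trans (by omega)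
    have hlast : v (Fin.last h') = 0 := (hmemD v hv).2 _ (by simp)
    have hsum2 : ∑ i : Fin h', v i.castSucc = ∑ j, v j := by
      rw [Fin.sum_univ_castSucc (f := v), hlast, add_zero]
    rw [hΨ]
    rw [Fin.sum_univ_castSucc]
    simp only [Fin.coe_castSucc, Fin.is_lt, if_pos, Fin.val_last, lt_self_iff_false,
      if_neg, not_false_iff]
    rw [hsum2]
    omega
  have hcoord : ∀ v ∈ D, ∀ i, L ≤ Ψ v i ∧ Ψ v i ≤ n := by
    intro v hv i
    obtain ⟨h1, h2⟩ := hmemD v hv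
    by_cases hi : (i:ℕ) < h'
    · have := Finset.mem_Ioc.1 (h1 i hi)
      rw [hΨ]; simp only [if_pos hi]
      omega
    · rw [hΨ]; simp only [if_neg hi]
      have := hsumv v hv
      omega
  have hΨTn : ∀ v ∈ D, Ψ v ∈ Tn := by
    intro v hv
    rw [hTn, Finset.mem_filter, Fintype.mem_piFinset]
    exact ⟨fun i => Finset.mem_range.2 (by have := (hcoord v hv i).2; omega), hsumΨ v hv⟩
  have hinj : ∀ v ∈ D, ∀ w ∈ D, Ψ v = Ψ w → v = w := by
    intro v hv w hw hvw
    funext i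
    by_cases hi : (i:ℕ) < h'
    · have h3 : Ψ v i = Ψ w i := by rw [hvw]
      simpa [hΨ, hi] using h3
    · rw [(hmemD v hv).2 i hi, (hmemD w hw).2 i hi]
  have hcard : D.card = L ^ h' := by
    rw [hD, Fintype.card_piFinset]
    rw [Fin.prod_univ_castSucc]
    simp only [Fin.coe_castSucc, Fin.is_lt, if_pos, Fin.val_last, lt_self_iff_false,
      if_neg, not_false_iff]
    simp [Nat.card_Ioc, Nat.two_mul]
  have step1 : (L : ℝ) ^ h' * bL ^ (h'+1) = ∑ _v ∈ D, bL ^ (h'+1) := by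
    rw [Finset.sum_const, hcard, nsmul_eq_mul]; push_cast; ring
  have step2 : ∀ v ∈ D, bL ^ (h'+1) ≤ ∏ m ∈ Finset.image (Ψ v) Finset.univ, β m := by
    intro v hv
    calc bL ^ (h'+1) = ∏ _i : Fin (h'+1), bL := by
          rw [Finset.prod_const, Finset.card_univ, Fintype.card_fin]
      _ ≤ ∏ i, β (Ψ v i) := by
          apply Finset.prod_le_prod (fun i _ => hbL0)
          intro i _
          exact hbL _ (hcoord v hv i).1 (hcoord v hv i).2
      _ ≤ ∏ m ∈ Finset.image (Ψ v) Finset.univ, β m := prod_image_ge _ β hβ _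
  have step3 : ∑ v ∈ D, (∏ m ∈ Finset.image (Ψ v) Finset.univ, β m)
      = ∑ t ∈ D.image Ψ, ∏ m ∈ Finset.image t Finset.univ, β m :=
    (Finset.sum_image (f := fun t => ∏ m ∈ Finset.image t Finset.univ, β m) hinj).symm
  have step4 : ∑ t ∈ D.image Ψ, (∏ m ∈ Finset.image t Finset.univ, β m)
      ≤ ∑ t ∈ Tn, ∏ m ∈ Finset.image t Finset.univ, β m := by
    apply Finset.sum_le_sum_of_subset_of_nonneg
    · intro t ht
      obtain ⟨v, hv, rfl⟩ := Finset.mem_image.1 ht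
      exact hΨTn v hv
    · intro t _ _
      exact Finset.prod_nonneg fun m _ => (hβ m).1
  have step12 : (L : ℝ) ^ h' * bL ^ (h'+1) ≤ ∑ v ∈ D, ∏ m ∈ Finset.image (Ψ v) Finset.univ, β m := by
    rw [step1]; exact Finset.sum_le_sum step2
  exact step12.trans (le_of_le_of_eq (le_of_eq step3) rfl |>.trans step4)

variable {h : ℕ}

noncomputable def encF (h : ℕ) (t : Fin h → ℕ) : Fin h → Fin h :=
  fun i => Fin.castLE (le_trans Finset.card_image_le (by simp))
    (((Finset.image t Finset.univ).orderIsoOfFin rfl).symm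
      ⟨t i, Finset.mem_image_of_mem t (Finset.mem_univ i)⟩)

noncomputable def encU (h : ℕ) (t : Fin h → ℕ) : Fin h → ℕ :=
  fun j => if hj : (j : ℕ) < (Finset.image t Finset.univ).card
    then (((Finset.image t Finset.univ).orderIsoOfFin rfl) ⟨(j : ℕ), hj⟩ : ℕ) else 0

lemma encU_encF (t : Fin h → ℕ) (i : Fin h) : encU h t (encF h t i) = t i := by
  unfold encU encF
  set s := Finset.image t Finset.univ with hs
  have hmem : t i ∈ s := Finset.mem_image_of_mem t (Finset.mem_univ i)
  set e := s.orderIsoOfFin rfl with he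
  have h1 : ((Fin.castLE (le_trans Finset.card_image_le (by simp)) (e.symm ⟨t i, hmem⟩) : Fin h) : ℕ)
      = ((e.symm ⟨t i, hmem⟩ : Fin s.card) : ℕ) := rfl
  have hlt : ((e.symm ⟨t i, hmem⟩ : Fin s.card) : ℕ) < s.card := (e.symm ⟨t i, hmem⟩).isLt
  rw [dif_pos (by rw [h1]; exact hlt)]
  have h2 : (⟨((Fin.castLE (le_trans Finset.card_image_le (by simp)) (e.symm ⟨t i, hmem⟩) : Fin h) : ℕ),
      by rw [h1]; exact hlt⟩ : Fin s.card) = e.symm ⟨t i, hmem⟩ := Fin.ext h1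
  rw [h2, OrderIso.apply_symm_apply]

lemma encF_mem_iff (t : Fin h → ℕ) (j : Fin h) :
    j ∈ Finset.image (encF h t) Finset.univ ↔ (j : ℕ) < (Finset.image t Finset.univ).card := by
  constructor
  · rintro hj
    obtain ⟨i, _, rfl⟩ := Finset.mem_image.1 hj
    exact (((Finset.image t Finset.univ).orderIsoOfFin rfl).symm
      ⟨t i, Finset.mem_image_of_mem t (Finset.mem_univ i)⟩).isLt
  · intro hj
    set s := Finset.image t Finset.univ with hs
    set e := s.orderIsoOfFin rfl with he
    have hmem : (e ⟨(j:ℕ), hj⟩ : ℕ) ∈ s := (e ⟨(j:ℕ), hj⟩).2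
    obtain ⟨i, _, hi⟩ := Finset.mem_image.1 hmem
    refine Finset.mem_image.2 ⟨i, Finset.mem_univ i, ?_⟩
    apply Fin.ext
    show ((e.symm ⟨t i, _⟩ : Fin s.card) : ℕ) = (j : ℕ)
    have : (⟨t i, Finset.mem_image_of_mem t (Finset.mem_univ i)⟩ : {x // x ∈ s})
        = e ⟨(j:ℕ), hj⟩ := Subtype.ext (by simp [hi])
    rw [this, OrderIso.symm_apply_apply]

lemma encU_mem (t : Fin h → ℕ) (j : Fin h) (hj : (j : ℕ) < (Finset.image t Finset.univ).card) :
    encU h t j ∈ Finset.image t Finset.univ := by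
  unfold encU
  rw [dif_pos hj]
  exact (((Finset.image t Finset.univ).orderIsoOfFin rfl) ⟨(j:ℕ), hj⟩).2

lemma encU_zero (t : Fin h → ℕ) (j : Fin h) (hj : ¬ (j : ℕ) < (Finset.image t Finset.univ).card) :
    encU h t j = 0 := by
  unfold encU; rw [dif_neg hj]

lemma prod_encU (β : ℕ → ℝ) (t : Fin h → ℕ) :
    ∏ j ∈ Finset.image (encF h t) Finset.univ, β (encU h t j)
      = ∏ m ∈ Finset.image t Finset.univ, β m := by
  apply Finset.prod_bij (i := fun j _ => encU h t j)
  · intro j hj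
    exact encU_mem t j ((encF_mem_iff t j).1 hj)
  · intro j₁ hj₁ j₂ hj₂ heq
    have h1 := (encF_mem_iff t j₁).1 hj₁
    have h2 := (encF_mem_iff t j₂).1 hj₂
    unfold encU at heq
    rw [dif_pos h1, dif_pos h2] at heq
    have := ((Finset.image t Finset.univ).orderIsoOfFin rfl).injective
      (Subtype.ext heq)
    have hval : (j₁ : ℕ) = (j₂ : ℕ) := by simpa [Fin.mk.injEq] using this
    exact Fin.ext hval
  · intro m hm
    obtain ⟨i, _, rfl⟩ := Finset.mem_image.1 hm
    refine ⟨encF h t i, Finset.mem_image_of_mem _ (Finset.mem_univ i), encU_encF t i⟩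
  · intro j _
    rfl

set_option maxHeartbeats 1600000 in
lemma upper_inner (h n : ℕ) (hh : 1 ≤ h) (hn : 1 ≤ n) (β : ℕ → ℝ)
    (hβ : ∀ k, 0 ≤ β k ∧ β k ≤ 1) (Cn Sb : ℝ) (hCn0 : 0 ≤ Cn)
    (hβn : ∀ k, k ≤ n → β k * ((k:ℝ)+1) ≤ Cn)
    (hS : ∑ k ∈ Finset.range (n+1), β k ≤ Sb) (hSb1 : 1 ≤ Sb) (f : Fin h → Fin h) :
    ∑ u ∈ (Fintype.piFinset fun j : Fin h =>
        if j ∈ Finset.image f Finset.univ then Finset.range (n+1) else ({0} : Finset ℕ)).filter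
        (fun u => ∑ i, u (f i) = n),
      ∏ j ∈ Finset.image f Finset.univ, β (u j)
      ≤ (h:ℝ) * ((h * Cn / n) * Sb ^ (h-1)) := by
  classical
  set I := Finset.image f Finset.univ with hI
  set Uf := (Fintype.piFinset fun j : Fin h =>
      if j ∈ I then Finset.range (n+1) else ({0} : Finset ℕ)).filter
      (fun u => ∑ i, u (f i) = n) with hUf
  set pick : (Fin h → ℕ) → Fin h := fun u =>
    if hc : ∃ i, n ≤ h * u (f i) then hc.choose else ⟨0, hh⟩ with hpick
  rw [← Finset.sum_fiberwise Uf pick (fun u => ∏ j ∈ I, β (u j))]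
  have key : ∀ i₀ : Fin h, ∑ u ∈ Uf.filter (fun u => pick u = i₀), ∏ j ∈ I, β (u j)
      ≤ (h * Cn / n) * Sb ^ (h-1) := by
    intro i₀
    set j₀ := f i₀ with hj₀
    have hj₀I : j₀ ∈ I := Finset.mem_image_of_mem f (Finset.mem_univ i₀)
    set F := Uf.filter (fun u => pick u = i₀) with hF
    have hFU : ∀ u ∈ F, u ∈ Uf := fun u hu => (Finset.mem_filter.1 hu).1
    have hsum : ∀ u ∈ Uf, ∑ i, u (f i) = n := fun u hu => (Finset.mem_filter.1 hu).2
    have hpi : ∀ u ∈ Uf, ∀ j, u j ∈ (if j ∈ I then Finset.range (n+1) else ({0} : Finset ℕ)) :=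
      fun u hu => Fintype.mem_piFinset.1 (Finset.mem_filter.1 hu).1
    have hub : ∀ u ∈ Uf, ∀ j ∈ I, u j ≤ n := by
      intro u hu j hj
      have := hpi u hu j
      rw [if_pos hj] at this
      simpa [Nat.lt_succ_iff] using this
    have huz : ∀ u ∈ Uf, ∀ j, j ∉ I → u j = 0 := by
      intro u hu j hj
      have := hpi u hu j
      rw [if_neg hj] at this
      simpa using this
    have hpickspec : ∀ u ∈ F, n ≤ h * u j₀ := by
      intro u hu
      have hc : ∃ i, n ≤ h * u (f i) := by
        have hne : (Finset.univ : Finset (Fin h)).Nonempty := ⟨⟨0, hh⟩, Finset.mem_univ _⟩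
        have hle : ∑ _i : Fin h, n ≤ ∑ i, h * u (f i) := by
          rw [← Finset.mul_sum, hsum u (hFU u hu), Finset.sum_const, Finset.card_univ,
            Fintype.card_fin, smul_eq_mul]
        obtain ⟨i, _, hi⟩ := Finset.exists_le_of_sum_le hne hle
        exact ⟨i, hi⟩
      have hp : pick u = i₀ := (Finset.mem_filter.1 hu).2
      have := hc.choose_spec
      rw [hpick] at hp
      simp only [dif_pos hc] at hp
      rw [hp] at this
      simpa [hj₀] using this
    -- pointwise bound
    have hβj₀ : ∀ u ∈ F, β (u j₀) ≤ h * Cn / n := by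
      intro u hu
      have h1 : u j₀ ≤ n := hub u (hFU u hu) j₀ hj₀I
      have h2 : (n:ℝ) ≤ h * ((u j₀ : ℝ) + 1) := by
        have := hpickspec u hu
        have : (n:ℝ) ≤ h * (u j₀ : ℝ) := by exact_mod_cast this
        nlinarith [Nat.cast_nonneg (α := ℝ) h]
      have h3 : β (u j₀) * ((u j₀ : ℝ) + 1) ≤ Cn := hβn _ h1
      have hpos : (0:ℝ) < (u j₀ : ℝ) + 1 := by positivity
      have hnpos : (0:ℝ) < n := by exact_mod_cast hn
      calc β (u j₀) = β (u j₀) * ((u j₀:ℝ)+1) / ((u j₀:ℝ)+1) := by field_simp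
        _ ≤ Cn / ((u j₀:ℝ)+1) := by
            exact div_le_div_of_nonneg_right h3 hpos.le
        _ ≤ h * Cn / n := by
            rw [div_le_div_iff₀ hpos hnpos]
            nlinarith [hCn0]
    -- now the rest of inner sum bound
    set R : (Fin h → ℕ) → ℝ := fun u => ∏ j ∈ I.erase j₀, β (u j) with hR
    have hR0 : ∀ u, 0 ≤ R u := fun u => Finset.prod_nonneg fun j _ => (hβ _).1
    have hsplit : ∀ u ∈ F, ∏ j ∈ I, β (u j) ≤ (h * Cn / n) * R u := by
      intro u hu
      rw [← Finset.mul_prod_erase I _ hj₀I]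
      exact mul_le_mul_of_nonneg_right (hβj₀ u hu) (hR0 u)
    have hRsum : ∑ u ∈ F, R u ≤ Sb ^ (h-1) := by
      set e : (Fin h → ℕ) → (Fin h → ℕ) := fun u => Function.update u j₀ 0 with he
      have hRe : ∀ u, R (e u) = R u := by
        intro u
        apply Finset.prod_congr rfl
        intro j hj
        rw [he]
        simp only [Function.update_of_ne (Finset.mem_erase.1 hj).1]
      have hinj : ∀ u ∈ F, ∀ u' ∈ F, e u = e u' → u = u' := by
        intro u hu u' hu' heq
        have hoff : ∀ j, j ≠ j₀ → u j = u' j := by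
          intro j hj
          simp only [he] at heq
          have := congrFun heq j
          rwa [Function.update_of_ne hj, Function.update_of_ne hj] at this
        have hcsplit : ∀ w : Fin h → ℕ,
            ∑ i, w (f i) = (Finset.univ.filter (fun i => f i = j₀)).card * w j₀
              + ∑ i ∈ Finset.univ.filter (fun i => ¬ f i = j₀), w (f i) := by
          intro w
          rw [← Finset.sum_filter_add_sum_filter_not Finset.univ (fun i => f i = j₀)]
          congr 1
          rw [Finset.sum_congr rfl (fun i hi => by rw [(Finset.mem_filter.1 hi).2]),
            Finset.sum_const, smul_eq_mul]
        have hc1 : 0 < (Finset.univ.filter (fun i => f i = j₀)).card := by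
          apply Finset.card_pos.2
          exact ⟨i₀, Finset.mem_filter.2 ⟨Finset.mem_univ _, rfl⟩⟩
        have hs1 := hsum u (hFU u hu)
        have hs2 := hsum u' (hFU u' hu')
        rw [hcsplit u] at hs1
        rw [hcsplit u'] at hs2
        have hrest : ∑ i ∈ Finset.univ.filter (fun i => ¬ f i = j₀), u (f i)
            = ∑ i ∈ Finset.univ.filter (fun i => ¬ f i = j₀), u' (f i) :=
          Finset.sum_congr rfl fun i hi => hoff _ (Finset.mem_filter.1 hi).2
        have hj₀eq : u j₀ = u' j₀ := by
          apply Nat.eq_of_mul_eq_mul_left hc1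
          omega
        funext j
        by_cases hj : j = j₀
        · rw [hj]; exact hj₀eq
        · exact hoff j hj
      have hmaps : ∀ u ∈ F, e u ∈ Fintype.piFinset (fun j : Fin h =>
          if j ∈ I.erase j₀ then Finset.range (n+1) else ({0} : Finset ℕ)) := by
        intro u hu
        rw [Fintype.mem_piFinset]
        intro j
        by_cases hj : j ∈ I.erase j₀
        · rw [if_pos hj]
          show Function.update u j₀ 0 j ∈ Finset.range (n+1)
          rw [Function.update_of_ne (Finset.mem_erase.1 hj).1]
          exact Finset.mem_range.2 (Nat.lt_succ_of_le
            (hub u (hFU u hu) j (Finset.mem_erase.1 hj).2))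
        · rw [if_neg hj]
          by_cases hjj : j = j₀
          · show Function.update u j₀ 0 j ∈ ({0} : Finset ℕ)
            rw [hjj]; simp
          · have hjI : j ∉ I := fun hmem =>
              hj (Finset.mem_erase.2 ⟨hjj, hmem⟩)
            show Function.update u j₀ 0 j ∈ ({0} : Finset ℕ)
            rw [Function.update_of_ne hjj]
            simp [huz u (hFU u hu) j hjI]
      calc ∑ u ∈ F, R u = ∑ u ∈ F, R (e u) := by
            exact Finset.sum_congr rfl fun u _ => (hRe u).symm
        _ = ∑ w ∈ F.image e, R w := (Finset.sum_image hinj).symm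
        _ ≤ ∑ w ∈ Fintype.piFinset (fun j : Fin h =>
              if j ∈ I.erase j₀ then Finset.range (n+1) else ({0} : Finset ℕ)), R w := by
            apply Finset.sum_le_sum_of_subset_of_nonneg
            · intro w hw
              obtain ⟨u, hu, rfl⟩ := Finset.mem_image.1 hw
              exact hmaps u hu
            · intro w _ _
              exact hR0 w
        _ = ∏ j : Fin h, ∑ x ∈ (if j ∈ I.erase j₀ then Finset.range (n+1)
              else ({0} : Finset ℕ)), (if j ∈ I.erase j₀ then β x else 1) := by
            rw [Finset.prod_univ_sum]
            apply Finset.sum_congr rfl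
            intro w _
            show (∏ j ∈ I.erase j₀, β (w j)) = ∏ i : Fin h, if i ∈ I.erase j₀ then β (w i) else 1
            rw [← Finset.prod_filter (fun j => j ∈ I.erase j₀) (fun j => β (w j)),
              Finset.filter_univ_mem]
        _ ≤ ∏ _j : Fin h, (if _j ∈ I.erase j₀ then Sb else 1) := by
            apply Finset.prod_le_prod
            · intro j _
              by_cases hj : j ∈ I.erase j₀
              · simp only [hj, if_true]
                exact Finset.sum_nonneg fun x _ => (hβ x).1
              · simp [hj]
            · intro j _
              by_cases hj : j ∈ I.erase j₀
              · simpa only [hj, if_true] using hS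
              · simp [hj]
        _ ≤ Sb ^ (h-1) := by
            have hprodeq : (∏ _j : Fin h, (if _j ∈ I.erase j₀ then Sb else 1))
                = Sb ^ (I.erase j₀).card := by
              rw [← Finset.prod_filter (fun j => j ∈ I.erase j₀) (fun _ => Sb),
                Finset.filter_univ_mem, Finset.prod_const]
            rw [hprodeq]
            apply pow_le_pow_right₀ hSb1
            have hIcard : I.card ≤ h := Finset.card_image_le.trans (by simp)
            rw [Finset.card_erase_of_mem hj₀I]
            omega
    calc ∑ u ∈ F, ∏ j ∈ I, β (u j) ≤ ∑ u ∈ F, (h * Cn / n) * R u :=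
          Finset.sum_le_sum hsplit
      _ = (h * Cn / n) * ∑ u ∈ F, R u := by rw [Finset.mul_sum]
      _ ≤ (h * Cn / n) * Sb ^ (h-1) := by
          apply mul_le_mul_of_nonneg_left hRsum
          positivity
  calc ∑ i₀ : Fin h, ∑ u ∈ Uf.filter (fun u => pick u = i₀), ∏ j ∈ I, β (u j)
      ≤ ∑ _i₀ : Fin h, (h * Cn / n) * Sb ^ (h-1) := Finset.sum_le_sum fun i₀ _ => key i₀
    _ = (h:ℝ) * ((h * Cn / n) * Sb ^ (h-1)) := by
        rw [Finset.sum_const, Finset.card_univ, Fintype.card_fin, nsmul_eq_mul]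

set_option maxHeartbeats 1600000 in
lemma upper_sum (h n : ℕ) (hh : 1 ≤ h) (hn : 1 ≤ n) (β : ℕ → ℝ)
    (hβ : ∀ k, 0 ≤ β k ∧ β k ≤ 1) (Cn Sb : ℝ) (hCn0 : 0 ≤ Cn)
    (hβn : ∀ k, k ≤ n → β k * ((k:ℝ)+1) ≤ Cn)
    (hS : ∑ k ∈ Finset.range (n+1), β k ≤ Sb) (hSb1 : 1 ≤ Sb) :
    ∑ t ∈ (Fintype.piFinset fun _ : Fin h => Finset.range (n+1)).filter
        (fun t => ∑ i, t i = n),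
      ∏ m ∈ Finset.image t Finset.univ, β m
    ≤ ((h:ℝ)^h) * ((h:ℝ) * ((h * Cn / n) * Sb ^ (h-1))) := by
  classical
  set Tn := (Fintype.piFinset fun _ : Fin h => Finset.range (n+1)).filter
      (fun t => ∑ i, t i = n) with hTn
  set U : (Fin h → Fin h) → Finset (Fin h → ℕ) := fun f =>
    (Fintype.piFinset fun j : Fin h =>
      if j ∈ Finset.image f Finset.univ then Finset.range (n+1) else ({0} : Finset ℕ)).filter
      (fun u => ∑ i, u (f i) = n) with hU
  set W : (Σ _f : Fin h → Fin h, Fin h → ℕ) → ℝ :=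
    fun p => ∏ j ∈ Finset.image p.1 Finset.univ, β (p.2 j) with hW
  set encP : (Fin h → ℕ) → (Σ _f : Fin h → Fin h, Fin h → ℕ) :=
    fun t => ⟨encF h t, encU h t⟩ with hencP
  have hW0 : ∀ p, 0 ≤ W p := fun p => Finset.prod_nonneg fun j _ => (hβ _).1
  have h1 : ∀ t ∈ Tn, (∏ m ∈ Finset.image t Finset.univ, β m) = W (encP t) :=
    fun t _ => (prod_encU β t).symm
  have hinj : ∀ t ∈ Tn, ∀ t' ∈ Tn, encP t = encP t' → t = t' := by
    intro t _ t' _ hE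
    have h2 : encU h t = encU h t' := congrArg Sigma.snd hE
    have h3 : encF h t = encF h t' := congrArg Sigma.fst hE
    funext i
    rw [← encU_encF t i, ← encU_encF t' i, h2, h3]
  have hsub : Tn.image encP ⊆ Finset.univ.sigma (fun f => U f) := by
    intro p hp
    obtain ⟨t, ht, rfl⟩ := Finset.mem_image.1 hp
    rw [Finset.mem_sigma]
    refine ⟨Finset.mem_univ _, ?_⟩
    rw [hU]
    rw [Finset.mem_filter, Fintype.mem_piFinset]
    simp only [hencP]
    have htpi : ∀ i, t i ∈ Finset.range (n+1) :=
      fun i => Fintype.mem_piFinset.1 (Finset.mem_filter.1 ht).1 i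
    constructor
    · intro j
      by_cases hj : j ∈ Finset.image (encF h t) Finset.univ
      · rw [if_pos hj]
        have hlt := (encF_mem_iff t j).1 hj
        have := encU_mem t j hlt
        obtain ⟨i, _, hi⟩ := Finset.mem_image.1 this
        rw [← hi]
        exact htpi i
      · rw [if_neg hj]
        have := encU_zero t j (fun hlt => hj ((encF_mem_iff t j).2 hlt))
        simp [this]
    · have : ∑ i, encU h t (encF h t i) = ∑ i, t i :=
        Finset.sum_congr rfl fun i _ => encU_encF t i
      rw [this]
      exact (Finset.mem_filter.1 ht).2
  calc ∑ t ∈ Tn, ∏ m ∈ Finset.image t Finset.univ, β m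
      = ∑ t ∈ Tn, W (encP t) := Finset.sum_congr rfl h1
    _ = ∑ p ∈ Tn.image encP, W p := (Finset.sum_image hinj).symm
    _ ≤ ∑ p ∈ Finset.univ.sigma (fun f => U f), W p :=
        Finset.sum_le_sum_of_subset_of_nonneg hsub (fun p _ _ => hW0 p)
    _ = ∑ f : Fin h → Fin h, ∑ u ∈ U f, ∏ j ∈ Finset.image f Finset.univ, β (u j) :=
        Finset.sum_sigma _ _ _
    _ ≤ ∑ _f : Fin h → Fin h, ((h:ℝ) * ((h * Cn / n) * Sb ^ (h-1))) := by
        apply Finset.sum_le_sum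
        intro f _
        exact upper_inner h n hh hn β hβ Cn Sb hCn0 hβn hS hSb1 f
    _ = ((h:ℝ)^h) * ((h:ℝ) * ((h * Cn / n) * Sb ^ (h-1))) := by
        rw [Finset.sum_const, Finset.card_univ, Fintype.card_fun, nsmul_eq_mul]
        push_cast
        simp [Fintype.card_fin]

end Aux

set_option maxHeartbeats 3000000 in
theorem stmt_3 (A : Set ℕ) (hA : ORplus A) (h : ℕ) (hh : 1 ≤ h)
    (μ : Measure (ℕ → Bool))
    (hμ : IsBernoulliProduct μ (fun n => (cntA A n : ℝ) / (n + 1))) :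
    (fun n : ℕ => ∫ ω, (rA {m | ω m = true} h n : ℝ) ∂μ) =Θ[atTop]
      (fun n : ℕ => (cntA A n : ℝ) ^ h / n) := by
  classical
  obtain ⟨hinf, hOR, hPI⟩ := hA
  obtain ⟨q, rfl⟩ : ∃ q, h = q + 1 := ⟨h - 1, by omega⟩
  set αf : ℕ → ℝ := fun k => (cntA A (k:ℝ) : ℝ) / ((k:ℝ) + 1) with hαf
  have hEfun : (fun n : ℕ => ∫ ω, (rA {m | ω m = true} (q+1) n : ℝ) ∂μ)
      = fun n : ℕ => ∑ t ∈ (Fintype.piFinset fun _ : Fin (q+1) => Finset.range (n+1)).filter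
          (fun t => ∑ i, t i = n), ∏ m ∈ Finset.image t Finset.univ, αf m :=
    funext fun n => integral_rA A (q+1) n μ hμ
  rw [hEfun]
  set E : ℕ → ℝ := fun n => ∑ t ∈ (Fintype.piFinset fun _ : Fin (q+1) => Finset.range (n+1)).filter
      (fun t => ∑ i, t i = n), ∏ m ∈ Finset.image t Finset.univ, αf m with hE
  have hβ : ∀ k, 0 ≤ αf k ∧ αf k ≤ 1 := by
    intro k
    constructor
    · positivity
    · rw [hαf, div_le_one (by positivity)]
      exact_mod_cast cntA_le_succ A k
  have hE0 : ∀ n, 0 ≤ E n :=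
    fun n => Finset.sum_nonneg fun t _ => Finset.prod_nonneg fun m _ => (hβ m).1
  -- constants
  obtain ⟨C, hC1, hCev⟩ := or_const A hOR
  obtain ⟨K, hK2, hKev⟩ := pi_const A hPI
  obtain ⟨M₀, hKM⟩ := Filter.eventually_atTop.1 hKev
  obtain ⟨N₀, hN₀2, hdb⟩ := doubling A hinf hKM
  obtain ⟨D, hD⟩ := sum_alpha_le A hinf hK2 hN₀2 hdb
  set J := q + 3 with hJ
  have h2J : (4 * (q+1) : ℕ) ≤ 2 ^ J := by
    have h1 : q < 2 ^ q := Nat.lt_two_pow_self (n := q)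
    have h2 : 2^J = 2^q * 8 := by rw [hJ, pow_add]; ring
    omega
  have hiter := or_iter A hC1 hCev J
  have hiterN : ∀ᶠ n : ℕ in atTop,
      (cntA A (n:ℝ) : ℝ) ≤ C ^ J * cntA A ((n:ℝ) / 2 ^ J) :=
    tendsto_natCast_atTop_atTop.eventually hiter
  have hCn_big : ∀ᶠ n : ℕ in atTop, max 1 D ≤ (cntA A (n:ℝ) : ℝ) := by
    filter_upwards [(cntA_tendsto A hinf).eventually_ge_atTop ⌈max 1 D⌉₊] with n hn
    calc max 1 D ≤ (⌈max 1 D⌉₊ : ℝ) := Nat.le_ceil _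
      _ ≤ (cntA A (n:ℝ) : ℝ) := by exact_mod_cast hn
  have hC0 : (0:ℝ) < C := by linarith
  have hCJ0 : (0:ℝ) < C ^ J := by positivity
  have hKR : (2:ℝ) ≤ (K:ℕ) := by exact_mod_cast hK2
  constructor
  · -- upper bound
    rw [Asymptotics.isBigO_iff]
    refine ⟨((q+1:ℝ))^(q+1) * (q+1) * (q+1) * (6*K+1)^q, ?_⟩
    filter_upwards [hCn_big, Filter.eventually_ge_atTop 1] with n hCn hn1
    set Cn : ℝ := (cntA A (n:ℝ) : ℝ) with hCndef
    have hCn1 : (1:ℝ) ≤ Cn := le_trans (le_max_left 1 D) hCn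
    have hCnD : D ≤ Cn := le_trans (le_max_right 1 D) hCn
    have hnR : (1:ℝ) ≤ (n:ℝ) := by exact_mod_cast hn1
    have hβn : ∀ k, k ≤ n → αf k * ((k:ℝ)+1) ≤ Cn := by
      intro k hk
      rw [hαf]
      have : (cntA A (k:ℝ) : ℝ) / ((k:ℝ)+1) * ((k:ℝ)+1) = (cntA A (k:ℝ) : ℝ) := by
        field_simp
      rw [this, hCndef]
      exact_mod_cast cntA_mono A (by exact_mod_cast Nat.cast_le.2 hk)
    have hS : ∑ k ∈ Finset.range (n+1), αf k ≤ (6*K+1) * Cn := by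
      have h1 := hD n
      have h2 : 6 * (K:ℝ) * Cn + D ≤ (6*K+1) * Cn := by nlinarith
      exact le_trans h1 h2
    have hSb1 : (1:ℝ) ≤ (6*K+1) * Cn := by nlinarith
    have hup := upper_sum (q+1) n (by omega) hn1 αf hβ Cn ((6*K+1)*Cn)
      (by linarith) hβn hS hSb1
    rw [Real.norm_eq_abs, Real.norm_eq_abs, abs_of_nonneg (hE0 n),
      abs_of_nonneg (by positivity)]
    refine le_trans hup (le_of_eq ?_)
    have hq1 : (q + 1) - 1 = q := by omega
    rw [hq1, mul_pow]
    have hn0 : (n:ℝ) ≠ 0 := by linarith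
    push_cast
    field_simp
    ring
  · -- lower bound
    rw [Asymptotics.isBigO_iff]
    refine ⟨(4*((q:ℝ)+1))^q * (C^J)^(q+1) * 2^(q+1), ?_⟩
    filter_upwards [hCn_big, hiterN, Filter.eventually_ge_atTop (4*(q+1))] with n hCn hit hn4
    set Cn : ℝ := (cntA A (n:ℝ) : ℝ) with hCndef
    have hCn1 : (1:ℝ) ≤ Cn := le_trans (le_max_left 1 D) hCn
    have hn1 : 1 ≤ n := by omega
    have hnR : (1:ℝ) ≤ (n:ℝ) := by exact_mod_cast hn1
    have hn0 : (0:ℝ) < (n:ℝ) := by linarith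
    set h' : ℝ := (q:ℝ) + 1 with hh'
    have hh'1 : (1:ℝ) ≤ h' := by
      rw [hh']
      have : (0:ℝ) ≤ (q:ℝ) := Nat.cast_nonneg q
      linarith
    have hn4R : 4 * h' ≤ (n:ℝ) := by
      rw [hh']; exact_mod_cast hn4
    set L := n / (2*(q+1)) with hL
    have h2L : 2 * (q+1) * L ≤ n := by
      rw [hL, Nat.mul_comm]
      exact Nat.div_mul_le_self n (2*(q+1))
    have hLlt : n < (L+1) * (2*(q+1)) := by
      have := Nat.lt_div_mul_add (a := n) (b := 2*(q+1)) (by omega)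
      calc n < n / (2*(q+1)) * (2*(q+1)) + 2*(q+1) := this
        _ = (L+1) * (2*(q+1)) := by rw [hL]; ring
    have hL4 : (n:ℝ) / (4*h') ≤ (L:ℝ) := by
      have hcast : (n:ℝ) < ((L:ℝ)+1) * (2*h') := by
        rw [hh']
        exact_mod_cast hLlt
      rw [div_le_iff₀ (by positivity)]
      nlinarith
    have hLn : (L:ℕ) ≤ n := by rw [hL]; exact Nat.div_le_self _ _
    -- cntA at L
    have h2JR : 4*h' ≤ (2:ℝ)^J := by
      rw [hh']
      calc 4*((q:ℝ)+1) = ((4*(q+1) : ℕ) : ℝ) := by push_cast; ring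
        _ ≤ ((2^J : ℕ) : ℝ) := by exact_mod_cast h2J
        _ = (2:ℝ)^J := by push_cast; ring
    have hdivle : (n:ℝ)/2^J ≤ (L:ℝ) := by
      calc (n:ℝ)/2^J ≤ (n:ℝ)/(4*h') := by
            apply div_le_div_of_nonneg_left (by linarith) (by positivity) h2JR
        _ ≤ (L:ℝ) := hL4
    have hCnL : Cn ≤ C^J * (cntA A ((L:ℕ):ℝ) : ℝ) := by
      refine le_trans hit ?_
      apply mul_le_mul_of_nonneg_left _ (le_of_lt hCJ0)
      exact_mod_cast cntA_mono A hdivle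
    set bL : ℝ := Cn / (C^J * ((n:ℝ)+1)) with hbLdef
    have hbL0 : 0 ≤ bL := by positivity
    have hbL : ∀ k, L ≤ k → k ≤ n → bL ≤ αf k := by
      intro k hkL hkn
      rw [hαf, hbLdef]
      have h1 : (cntA A ((L:ℕ):ℝ) : ℝ) ≤ (cntA A (k:ℝ) : ℝ) :=
        by exact_mod_cast cntA_mono A (by exact_mod_cast Nat.cast_le.2 hkL)
      have h2 : ((k:ℝ)+1) ≤ ((n:ℝ)+1) := by
        have : (k:ℝ) ≤ n := by exact_mod_cast hkn
        linarith
      rw [div_le_div_iff₀ (by positivity) (by positivity)]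
      have h3 : Cn * ((k:ℝ)+1) ≤ C^J * (cntA A ((L:ℕ):ℝ) : ℝ) * ((k:ℝ)+1) :=
        mul_le_mul_of_nonneg_right hCnL (by positivity)
      calc Cn * ((k:ℝ)+1) ≤ C^J * (cntA A ((L:ℕ):ℝ) : ℝ) * ((k:ℝ)+1) := h3
        _ ≤ C^J * (cntA A (k:ℝ) : ℝ) * ((n:ℝ)+1) := by
            have := mul_le_mul (mul_le_mul_of_nonneg_left h1 (le_of_lt hCJ0)) h2
              (by positivity) (by positivity)
            nlinarith [this]
        _ = (cntA A (k:ℝ) : ℝ) * (C^J * ((n:ℝ)+1)) := by ring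
    have hlow := lower_sum q n αf hβ L h2L bL hbL0 hbL
    rw [Real.norm_eq_abs, Real.norm_eq_abs, abs_of_nonneg (by positivity),
      abs_of_nonneg (hE0 n)]
    have hLq : ((n:ℝ)/(4*h'))^q ≤ (L:ℝ)^q := pow_le_pow_left₀ (by positivity) hL4 q
    have hE1 : ((n:ℝ)/(4*h'))^q * bL^(q+1) ≤ E n :=
      le_trans (mul_le_mul_of_nonneg_right hLq (by positivity)) hlow
    have key : ((n:ℝ)+1)^(q+1) ≤ 2^(q+1) * (n:ℝ)^(q+1) := by
      calc ((n:ℝ)+1)^(q+1) ≤ (2*(n:ℝ))^(q+1) :=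
            pow_le_pow_left₀ (by linarith) (by linarith) _
        _ = 2^(q+1) * (n:ℝ)^(q+1) := mul_pow _ _ _
    have e1 : (4*h')^q * (C^J)^(q+1) * 2^(q+1) * (((n:ℝ)/(4*h'))^q * bL^(q+1))
        = 2^(q+1) * (n:ℝ)^q * Cn^(q+1) / ((n:ℝ)+1)^(q+1) := by
      have hsplit2 : (C^J*((n:ℝ)+1))^(q+1) = (C^J)^(q+1) * ((n:ℝ)+1)^(q+1) := mul_pow _ _ _
      rw [hbLdef, div_pow, div_pow, hsplit2]
      field_simp
    have e2 : Cn^(q+1)/(n:ℝ) ≤ 2^(q+1) * (n:ℝ)^q * Cn^(q+1) / ((n:ℝ)+1)^(q+1) := by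
      rw [div_le_div_iff₀ hn0 (by positivity)]
      have hCp : (0:ℝ) ≤ Cn^(q+1) := by positivity
      have h5 := mul_le_mul_of_nonneg_left key hCp
      have h6 : (n:ℝ)^q * (n:ℝ) = (n:ℝ)^(q+1) := (pow_succ _ q).symm
      have h7 : 2^(q+1) * (n:ℝ)^q * Cn^(q+1) * n = Cn^(q+1) * (2^(q+1) * (n:ℝ)^(q+1)) := by
        rw [← h6]; ring
      rw [h7]
      exact h5
    calc Cn^(q+1)/(n:ℝ) ≤ 2^(q+1) * (n:ℝ)^q * Cn^(q+1) / ((n:ℝ)+1)^(q+1) := e2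
      _ = (4*h')^q * (C^J)^(q+1) * 2^(q+1) * (((n:ℝ)/(4*h'))^q * bL^(q+1)) := e1.symm
      _ ≤ (4*h')^q * (C^J)^(q+1) * 2^(q+1) * E n := by
          apply mul_le_mul_of_nonneg_left hE1 (by positivity)
end

section
/- Let 𝒜 ⊆ ℕ be an OR₊ sequence, let t₁, t₂ ≥ 1 be integers, and let f, g : ℕ → ℝ≥0 satisfy f(n) = Θ(A(n)^{t₁}/n) and g(n) = Θ(A(n)^{t₂}/n) as n → ∞. Then ∑_{k=1}^{n−1} f(k)·g(n−k) = Θ(A(n)^{t₁+t₂}/n) as n → ∞. -/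
/-!
Put `a = A^{t₁}` and `b = A^{t₂}`. Besides monotonicity, two properties of these weights matter:
`a(2n) = O(a(n))` (from OR), and `∑_{0<k≤n} a(k)/k = O(a(n))`. The last one comes from PI, which
makes `A` grow by a factor `3/2` whenever its argument is multiplied by a fixed `D`; for `t ≥ 1`
the sums over the blocks `(n/D^{j+1}, n/D^j]` then decay geometrically.

Upper bound: split the convolution at `n/2`. For `k ≤ n/2` we have `g(n-k) = O(b(n)/n)` and
`∑_{k≤n/2} f(k) = O(a(n))`; the other half is the same estimate with `f` and `g` swapped.
Lower bound: by the doubling property, each of the roughly `n/4` terms with `n/4 < k ≤ n/2` is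
`≳ a(n) b(n) / n²`.
-/

open Filter Asymptotics MeasureTheory

open Finset

section NonnegBigO

variable {α : Type*} {l : Filter α} {u v : α → ℝ}

lemma Asymptotics.IsBigO.exists_eventually_le_mul (h : u =O[l] v) (hv : 0 ≤ v) :
    ∃ C, 0 < C ∧ ∀ᶠ x in l, u x ≤ C * v x := by
  obtain ⟨C, hC, hCuv⟩ := h.exists_pos
  refine ⟨C, hC, hCuv.bound.mono fun x hx ↦ ?_⟩
  rw [Real.norm_of_nonneg (hv x)] at hx
  exact (le_abs_self _).trans hx

lemma Asymptotics.isBigO_of_eventually_le_mul (hu : 0 ≤ u) {C : ℝ} (hC : 0 ≤ C)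
    (h : ∀ᶠ x in l, u x ≤ C * v x) : u =O[l] v :=
  IsBigO.of_bound C <| h.mono fun x hx ↦ by
    rw [Real.norm_of_nonneg (hu x)]
    exact hx.trans (mul_le_mul_of_nonneg_left (le_abs_self _) hC)

end NonnegBigO

section Convolution

variable {a b f g : ℕ → ℝ}

lemma Monotone.sum_Ioc_div_le (ha : Monotone a) (ha0 : 0 ≤ a) {D : ℕ} (hD : 0 < D) (n : ℕ) :
    ∑ k ∈ Ioc (n / D) n, a k / k ≤ D * a n := by
  have hterm : ∀ k ∈ Ioc (n / D) n, a k / k ≤ a n / (n / D + 1 : ℕ) := by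
    intro k hk
    rw [mem_Ioc] at hk
    exact div_le_div₀ (ha0 n) (ha hk.2) (by positivity) (by exact_mod_cast hk.1)
  have hcard : ((Ioc (n / D) n).card : ℝ) ≤ D * (n / D + 1 : ℕ) := by
    have := Nat.lt_mul_div_succ n hD
    rw [Nat.card_Ioc]
    exact_mod_cast (Nat.sub_le n (n / D)).trans this.le
  calc ∑ k ∈ Ioc (n / D) n, a k / k
      ≤ (Ioc (n / D) n).card * (a n / (n / D + 1 : ℕ)) := by
        simpa only [nsmul_eq_mul] using sum_le_card_nsmul _ _ _ hterm
    _ ≤ D * (n / D + 1 : ℕ) * (a n / (n / D + 1 : ℕ)) := by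
        gcongr
        exact div_nonneg (ha0 n) (Nat.cast_nonneg _)
    _ = D * a n := by field_simp

lemma Monotone.isBigO_sum_Ioc_div_self (ha : Monotone a) (ha0 : 0 ≤ a)
    (ha1 : (fun _ ↦ (1 : ℝ)) =O[atTop] a) {θ : ℝ} (hθ0 : 0 ≤ θ) (hθ : θ < 1) {D : ℕ} (hD : 1 < D)
    (hgrowth : ∀ᶠ m in atTop, a m ≤ θ * a (D * m)) :
    (fun n ↦ ∑ k ∈ Ioc 0 n, a k / k) =O[atTop] a := by
  obtain ⟨M, hM⟩ := eventually_atTop.1 hgrowth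
  set S : ℕ → ℝ := fun n ↦ ∑ k ∈ Ioc 0 n, a k / k
  have hS0 : 0 ≤ S := fun n ↦ sum_nonneg fun k _ ↦ div_nonneg (ha0 k) k.cast_nonneg
  have hS : Monotone S := fun m n hmn ↦ sum_le_sum_of_subset_of_nonneg
    (Ioc_subset_Ioc_right hmn) fun k _ _ ↦ div_nonneg (ha0 k) k.cast_nonneg
  have hK : 0 ≤ D / (1 - θ) := div_nonneg (by positivity) (by linarith)
  -- `K = D / (1 - θ)` solves `K θ + D = K`: the block `(n / D, n]` costs `D * a n`, and
  -- `a (n / D) ≤ θ * a n`.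
  have hS_le : ∀ n, S n ≤ S (D * M) + D / (1 - θ) * a n := by
    intro n
    induction n using Nat.strong_induction_on with
    | _ n ih =>
      rcases le_or_gt n (D * M) with hn | hn
      · linarith [hS hn, mul_nonneg hK (ha0 n)]
      · have hm : M ≤ n / D := (Nat.le_div_iff_mul_le (by omega)).2 (by linarith [mul_comm D M])
        have hmn : n / D < n := Nat.div_lt_self (by omega) hD
        have hgrow : a (n / D) ≤ θ * a n :=
          (hM _ hm).trans (mul_le_mul_of_nonneg_left (ha (Nat.mul_div_le n D)) hθ0)
        calc S n = S (n / D) + ∑ k ∈ Ioc (n / D) n, a k / k :=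
              (sum_Ioc_consecutive _ (Nat.zero_le _) hmn.le).symm
          _ ≤ S (D * M) + D / (1 - θ) * (θ * a n) + D * a n := by
              have := ha.sum_Ioc_div_le ha0 (by omega : 0 < D) n
              have := mul_le_mul_of_nonneg_left hgrow hK
              linarith [ih _ hmn]
          _ = S (D * M) + D / (1 - θ) * a n := by
              field_simp [(by linarith : (1 - θ) ≠ 0)]
              ring
  refine IsBigO.trans ?_ ((ha1.const_mul_left (S (D * M))).add
    ((isBigO_refl a atTop).const_mul_left (D / (1 - θ))))
  refine isBigO_of_le _ fun n ↦ ?_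
  rw [Real.norm_of_nonneg (hS0 n), mul_one, Real.norm_eq_abs]
  exact (hS_le n).trans (le_abs_self _)

lemma isBigO_sum_Ioc_of_isBigO_div (hf : 0 ≤ f) (ha0 : 0 ≤ a)
    (hfa : f =O[atTop] fun n ↦ a n / n) (ha1 : (fun _ ↦ (1 : ℝ)) =O[atTop] a)
    (haS : (fun n ↦ ∑ k ∈ Ioc 0 n, a k / k) =O[atTop] a) :
    (fun n ↦ ∑ k ∈ Ioc 0 n, f k) =O[atTop] a := by
  obtain ⟨C, hC, hCf⟩ := hfa.exists_eventually_le_mul fun n ↦ div_nonneg (ha0 n) n.cast_nonneg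
  obtain ⟨N, hN⟩ := eventually_atTop.1 hCf
  refine IsBigO.trans ?_ ((ha1.const_mul_left (∑ k ∈ Ioc 0 N, f k)).add (haS.const_mul_left C))
  refine isBigO_of_eventually_le_mul (fun n ↦ sum_nonneg fun k _ ↦ hf k) zero_le_one ?_
  filter_upwards [eventually_ge_atTop N] with n hn
  have htail : ∑ k ∈ Ioc N n, f k ≤ C * ∑ k ∈ Ioc 0 n, a k / k := by
    rw [mul_sum]
    refine (sum_le_sum fun k hk ↦ hN k (mem_Ioc.1 hk).1.le).trans ?_
    exact sum_le_sum_of_subset_of_nonneg (Ioc_subset_Ioc_left (Nat.zero_le N))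
      fun k _ _ ↦ mul_nonneg hC.le (div_nonneg (ha0 k) k.cast_nonneg)
  rw [← sum_Ioc_consecutive _ (Nat.zero_le N) hn, one_mul, mul_one]
  linarith

lemma eventually_le_mul_div_of_isBigO (hb : Monotone b) (hb0 : 0 ≤ b)
    (hgb : g =O[atTop] fun n ↦ b n / n) :
    ∃ K, 0 ≤ K ∧ ∀ᶠ n in atTop, ∀ k, n ≤ 2 * k → k ≤ n → g k ≤ K * (b n / n) := by
  obtain ⟨C, hC, hCg⟩ := hgb.exists_eventually_le_mul fun n ↦ div_nonneg (hb0 n) n.cast_nonneg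
  obtain ⟨N, hN⟩ := eventually_atTop.1 hCg
  refine ⟨2 * C, by positivity, ?_⟩
  filter_upwards [eventually_ge_atTop (2 * N + 1)] with n hn k h2k hkn
  have hnk : (n : ℝ) / 2 ≤ k := by
    rw [div_le_iff₀ two_pos]
    exact_mod_cast (by omega : n ≤ k * 2)
  calc g k ≤ C * (b k / k) := hN k (by omega)
    _ ≤ C * (b n / (n / 2)) := by
        gcongr
        · exact hb0 n
        · exact div_pos (by exact_mod_cast (by omega : 0 < n)) two_pos
        · exact hb hkn
    _ = 2 * C * (b n / n) := by field_simp

lemma eventually_le_mul_of_le_four_mul (ha : Monotone a) (ha0 : 0 ≤ a)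
    (ha2 : (fun n ↦ a (2 * n)) =O[atTop] a) :
    ∃ C, 0 < C ∧ ∀ᶠ k in atTop, ∀ n ≤ 4 * k, a n ≤ C * a k := by
  obtain ⟨c, hc, hca⟩ := ha2.exists_eventually_le_mul ha0
  obtain ⟨N, hN⟩ := eventually_atTop.1 hca
  refine ⟨c * c, by positivity, ?_⟩
  filter_upwards [eventually_ge_atTop N] with k hk n hn
  calc a n ≤ a (2 * (2 * k)) := ha (by omega)
    _ ≤ c * a (2 * k) := hN _ (by omega)
    _ ≤ c * (c * a k) := by gcongr; exact hN k hk
    _ = c * c * a k := by ring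

lemma eventually_div_le_mul_of_isBigO (ha : Monotone a) (ha0 : 0 ≤ a)
    (ha2 : (fun n ↦ a (2 * n)) =O[atTop] a) (hf : 0 ≤ f)
    (haf : (fun n ↦ a n / n) =O[atTop] f) :
    ∃ K, 0 ≤ K ∧ ∀ᶠ n in atTop, ∀ k, n ≤ 4 * k → k ≤ n → a n / n ≤ K * f k := by
  obtain ⟨C, hC, hCa⟩ := eventually_le_mul_of_le_four_mul ha ha0 ha2
  obtain ⟨N₁, hN₁⟩ := eventually_atTop.1 hCa
  obtain ⟨c, hc, hcf⟩ := haf.exists_eventually_le_mul hf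
  obtain ⟨N₂, hN₂⟩ := eventually_atTop.1 hcf
  refine ⟨C * c, by positivity, ?_⟩
  filter_upwards [eventually_ge_atTop (4 * (N₁ + N₂) + 4)] with n hn k h4k hkn
  have hk : (0 : ℝ) < k := by exact_mod_cast (by omega : 0 < k)
  calc a n / n ≤ C * a k / k := by
        gcongr
        · exact mul_nonneg hC.le (ha0 k)
        · exact hN₁ k (by omega) n h4k
    _ = C * (a k / k) := mul_div_assoc _ _ _
    _ ≤ C * (c * f k) := by gcongr; exact hN₂ k (by omega)
    _ = C * c * f k := by ring

lemma sum_Ioo_le_sum_Ioc_half_add_sum_Ioc_half_sub {F : ℕ → ℝ} (hF : 0 ≤ F) (n : ℕ) :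
    ∑ k ∈ Ioo 0 n, F k ≤ ∑ k ∈ Ioc 0 (n / 2), F k + ∑ k ∈ Ioc 0 (n / 2), F (n - k) := by
  have hinj : Set.InjOn (n - ·) (Ioc 0 (n / 2) : Set ℕ) := fun x hx y hy hxy ↦ by
    simp only [coe_Ioc, Set.mem_Ioc] at hx hy
    simp only at hxy
    omega
  have hcover : Ioo 0 n ⊆ Ioc 0 (n / 2) ∪ (Ioc 0 (n / 2)).image (n - ·) := by
    intro k hk
    simp only [mem_Ioo] at hk
    simp only [mem_union, mem_Ioc, mem_image]
    by_cases hkn : k ≤ n / 2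
    · exact Or.inl ⟨hk.1, hkn⟩
    · exact Or.inr ⟨n - k, by omega, by omega⟩
  rw [← sum_image hinj]
  calc ∑ k ∈ Ioo 0 n, F k ≤ ∑ k ∈ Ioc 0 (n / 2) ∪ (Ioc 0 (n / 2)).image (n - ·), F k :=
        sum_le_sum_of_subset_of_nonneg hcover fun k _ _ ↦ hF k
    _ ≤ _ := by
        rw [← sum_union_inter]
        exact le_add_of_nonneg_right (sum_nonneg fun k _ ↦ hF k)

lemma isBigO_sum_Ioc_half_mul_sub (hf : 0 ≤ f) (hg : 0 ≤ g) (ha : Monotone a) (ha0 : 0 ≤ a)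
    (hb : Monotone b) (hb0 : 0 ≤ b) (hfS : (fun n ↦ ∑ k ∈ Ioc 0 n, f k) =O[atTop] a)
    (hgb : g =O[atTop] fun n ↦ b n / n) :
    (fun n ↦ ∑ k ∈ Ioc 0 (n / 2), f k * g (n - k)) =O[atTop] fun n ↦ a n * b n / n := by
  obtain ⟨K, hK, hKg⟩ := eventually_le_mul_div_of_isBigO hb hb0 hgb
  obtain ⟨C, hC, hCf⟩ := hfS.exists_eventually_le_mul ha0
  refine isBigO_of_eventually_le_mul (fun n ↦ sum_nonneg fun k _ ↦ mul_nonneg (hf k) (hg _))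
    (mul_nonneg hC.le hK) ?_
  filter_upwards [hKg, (Nat.tendsto_div_const_atTop two_ne_zero).eventually hCf]
    with n hg' hf'
  calc ∑ k ∈ Ioc 0 (n / 2), f k * g (n - k)
      ≤ ∑ k ∈ Ioc 0 (n / 2), f k * (K * (b n / n)) := by
        refine sum_le_sum fun k hk ↦ mul_le_mul_of_nonneg_left ?_ (hf k)
        have := (mem_Ioc.1 hk).2
        exact hg' _ (by omega) (by omega)
    _ = (∑ k ∈ Ioc 0 (n / 2), f k) * (K * (b n / n)) := (sum_mul _ _ _).symm
    _ ≤ (C * a n) * (K * (b n / n)) := by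
        gcongr
        · exact mul_nonneg hK (div_nonneg (hb0 n) n.cast_nonneg)
        · exact hf'.trans (mul_le_mul_of_nonneg_left (ha (Nat.div_le_self n 2)) hC.le)
    _ = C * K * (a n * b n / n) := by ring

lemma isBigO_sum_Ioo_mul_sub (hf : 0 ≤ f) (hg : 0 ≤ g) (ha : Monotone a) (ha0 : 0 ≤ a)
    (hb : Monotone b) (hb0 : 0 ≤ b) (hfS : (fun n ↦ ∑ k ∈ Ioc 0 n, f k) =O[atTop] a)
    (hgS : (fun n ↦ ∑ k ∈ Ioc 0 n, g k) =O[atTop] b) (hfa : f =O[atTop] fun n ↦ a n / n)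
    (hgb : g =O[atTop] fun n ↦ b n / n) :
    (fun n ↦ ∑ k ∈ Ioo 0 n, f k * g (n - k)) =O[atTop] fun n ↦ a n * b n / n := by
  have hfg := isBigO_sum_Ioc_half_mul_sub hf hg ha ha0 hb hb0 hfS hgb
  have hgf := isBigO_sum_Ioc_half_mul_sub hg hf hb hb0 ha ha0 hgS hfa
  refine IsBigO.trans ?_ (hfg.add (hgf.congr_right fun n ↦ by ring))
  refine isBigO_of_le _ fun n ↦ ?_
  have hreflect : ∑ k ∈ Ioc 0 (n / 2), f (n - k) * g (n - (n - k))
      = ∑ k ∈ Ioc 0 (n / 2), g k * f (n - k) := by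
    refine sum_congr rfl fun k hk ↦ ?_
    have := (mem_Ioc.1 hk).2
    rw [Nat.sub_sub_self (by omega), mul_comm]
  have hsum := sum_Ioo_le_sum_Ioc_half_add_sum_Ioc_half_sub
    (fun k ↦ mul_nonneg (hf k) (hg (n - k))) n
  rw [hreflect] at hsum
  rw [Real.norm_of_nonneg (sum_nonneg fun k _ ↦ mul_nonneg (hf k) (hg _)),
    Real.norm_of_nonneg (add_nonneg (sum_nonneg fun k _ ↦ mul_nonneg (hf k) (hg _))
      (sum_nonneg fun k _ ↦ mul_nonneg (hg k) (hf _)))]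
  exact hsum

lemma isBigO_mul_div_sum_Ioo_mul_sub (hf : 0 ≤ f) (hg : 0 ≤ g) (ha : Monotone a) (ha0 : 0 ≤ a)
    (hb : Monotone b) (hb0 : 0 ≤ b) (ha2 : (fun n ↦ a (2 * n)) =O[atTop] a)
    (hb2 : (fun n ↦ b (2 * n)) =O[atTop] b) (haf : (fun n ↦ a n / n) =O[atTop] f)
    (hbg : (fun n ↦ b n / n) =O[atTop] g) :
    (fun n ↦ a n * b n / n) =O[atTop] fun n ↦ ∑ k ∈ Ioo 0 n, f k * g (n - k) := by
  obtain ⟨K₁, hK₁, hf'⟩ := eventually_div_le_mul_of_isBigO ha ha0 ha2 hf haf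
  obtain ⟨K₂, hK₂, hg'⟩ := eventually_div_le_mul_of_isBigO hb hb0 hb2 hg hbg
  refine isBigO_of_eventually_le_mul (fun n ↦ div_nonneg (mul_nonneg (ha0 n) (hb0 n))
    n.cast_nonneg) (by positivity : 0 ≤ 16 * (K₁ * K₂)) ?_
  filter_upwards [hf', hg', eventually_ge_atTop 2] with n hf' hg' hn
  have hn0 : (0 : ℝ) < n := by exact_mod_cast (by omega : 0 < n)
  have han := div_nonneg (ha0 n) hn0.le
  have hbn := div_nonneg (hb0 n) hn0.le
  have hterm : ∀ k ∈ Ioc (n / 4) (n / 2), a n / n * (b n / n) ≤ K₁ * K₂ * (f k * g (n - k)) := by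
    intro k hk
    have := mem_Ioc.1 hk
    calc a n / n * (b n / n) ≤ (K₁ * f k) * (K₂ * g (n - k)) :=
          mul_le_mul (hf' k (by omega) (by omega)) (hg' _ (by omega) (by omega)) hbn
            (mul_nonneg hK₁ (hf k))
      _ = K₁ * K₂ * (f k * g (n - k)) := by ring
  have hcard : (n : ℝ) ≤ 16 * (Ioc (n / 4) (n / 2)).card := by
    rw [Nat.card_Ioc]
    exact_mod_cast (by omega : n ≤ 16 * (n / 2 - n / 4))
  calc a n * b n / n = n * (a n / n * (b n / n)) := by field_simp
    _ ≤ 16 * (Ioc (n / 4) (n / 2)).card * (a n / n * (b n / n)) := by gcongr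
    _ ≤ 16 * ∑ k ∈ Ioc (n / 4) (n / 2), K₁ * K₂ * (f k * g (n - k)) := by
        rw [mul_assoc]
        gcongr
        simpa only [nsmul_eq_mul] using card_nsmul_le_sum _ _ _ hterm
    _ = 16 * (K₁ * K₂) * ∑ k ∈ Ioc (n / 4) (n / 2), f k * g (n - k) := by
        rw [← mul_sum]
        ring
    _ ≤ 16 * (K₁ * K₂) * ∑ k ∈ Ioo 0 n, f k * g (n - k) := by
        gcongr
        · intro k _ _
          exact mul_nonneg (hf k) (hg _)
        · intro k hk
          simp only [mem_Ioc, mem_Ioo] at hk ⊢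
          omega

structure IsRegularWeight (a : ℕ → ℝ) : Prop where
  monotone : Monotone a
  nonneg : 0 ≤ a
  one_isBigO : (fun _ ↦ (1 : ℝ)) =O[atTop] a
  sum_div_isBigO : (fun n ↦ ∑ k ∈ Ioc 0 n, a k / k) =O[atTop] a
  comp_two_mul_isBigO : (fun n ↦ a (2 * n)) =O[atTop] a

theorem IsRegularWeight.isTheta_sum_Ioo_mul_sub (ha : IsRegularWeight a)
    (hb : IsRegularWeight b) (hf : 0 ≤ f) (hg : 0 ≤ g) (hfa : f =Θ[atTop] fun n ↦ a n / n)
    (hgb : g =Θ[atTop] fun n ↦ b n / n) :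
    (fun n ↦ ∑ k ∈ Ioo 0 n, f k * g (n - k)) =Θ[atTop] fun n ↦ a n * b n / n :=
  ⟨isBigO_sum_Ioo_mul_sub hf hg ha.monotone ha.nonneg hb.monotone hb.nonneg
      (isBigO_sum_Ioc_of_isBigO_div hf ha.nonneg hfa.1 ha.one_isBigO ha.sum_div_isBigO)
      (isBigO_sum_Ioc_of_isBigO_div hg hb.nonneg hgb.1 hb.one_isBigO hb.sum_div_isBigO)
      hfa.1 hgb.1,
    isBigO_mul_div_sum_Ioo_mul_sub hf hg ha.monotone ha.nonneg hb.monotone hb.nonneg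
      ha.comp_two_mul_isBigO hb.comp_two_mul_isBigO hfa.2 hgb.2⟩

end Convolution

section Counting

variable {A : Set ℕ}

lemma cntA_natCast (A : Set ℕ) [DecidablePred (· ∈ A)] (n : ℕ) :
    cntA A n = Nat.count (· ∈ A) (n + 1) := by
  have : {m : ℕ | m ∈ A ∧ (m : ℝ) ≤ n} = ↑({m ∈ range (n + 1) | m ∈ A}) := by
    ext m
    simp only [Set.mem_ofPred_eq, coe_filter, mem_range, Nat.lt_succ_iff, Nat.cast_le]
    exact and_comm
  rw [cntA, this, Set.ncard_coe_finset, Nat.count_eq_card_filter_range]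

lemma monotone_cntA_natCast (A : Set ℕ) : Monotone fun n : ℕ ↦ cntA A n := by
  classical
  intro m n hmn
  simp only [cntA_natCast]
  exact Nat.count_monotone _ (by omega)

lemma tendsto_cntA_natCast (hA : A.Infinite) : Tendsto (fun n : ℕ ↦ cntA A n) atTop atTop := by
  classical
  refine tendsto_atTop_atTop.2 fun m ↦ ⟨Nat.nth (· ∈ A) m, fun n hn ↦ ?_⟩
  rw [cntA_natCast]
  calc m = Nat.count (· ∈ A) (Nat.nth (· ∈ A) m) :=
        (Nat.count_nth_of_infinite (p := (· ∈ A)) hA m).symm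
    _ ≤ _ := Nat.count_monotone _ (by omega)

lemma ORseq.isBigO_cntA_two_mul_natCast (hA : ORseq A) :
    (fun n : ℕ ↦ (cntA A ↑(2 * n) : ℝ)) =O[atTop] fun n : ℕ ↦ (cntA A n : ℝ) := by
  simpa only [Nat.cast_mul, Nat.cast_ofNat, Function.comp_def] using
    hA.comp_tendsto tendsto_natCast_atTop_atTop

/-- With `k = A(m) - 1` we have `a_k ≤ m`, so `a_{2k} ≤ D m` and `A(D m) ≥ 2k + 1 = 2 A(m) - 1`. -/
lemma PIseq.eventually_three_mul_cntA_le (hinf : A.Infinite) (hA : PIseq A) :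
    ∃ D : ℕ, 1 < D ∧ ∀ᶠ m : ℕ in atTop, 3 * cntA A m ≤ 2 * cntA A ↑(D * m) := by
  classical
  obtain ⟨c, -, hc⟩ := hA.exists_eventually_le_mul fun n ↦ Nat.cast_nonneg _
  obtain ⟨N, hN⟩ := eventually_atTop.1 hc
  refine ⟨⌈c⌉₊ + 2, by omega, ?_⟩
  have hnth : ∀ k ≥ N, Nat.nth (· ∈ A) (2 * k) ≤ (⌈c⌉₊ + 2) * Nat.nth (· ∈ A) k := by
    intro k hk
    have : c ≤ ((⌈c⌉₊ + 2 : ℕ) : ℝ) := (Nat.le_ceil c).trans (by exact_mod_cast by omega)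
    exact_mod_cast (hN k hk).trans (mul_le_mul_of_nonneg_right this (Nat.cast_nonneg _))
  filter_upwards [(tendsto_cntA_natCast hinf).eventually_ge_atTop (N + 2)] with m hm
  simp only [cntA_natCast] at hm ⊢
  set k := Nat.count (· ∈ A) (m + 1) - 1
  have hk : Nat.nth (· ∈ A) k < m + 1 := Nat.nth_lt_of_lt_count (by omega)
  have h2k : Nat.nth (· ∈ A) (2 * k) < (⌈c⌉₊ + 2) * m + 1 :=
    Nat.lt_succ_of_le ((hnth k (by omega)).trans (Nat.mul_le_mul_left _ (by omega)))
  have := (Nat.lt_nth_iff_count_lt (p := (· ∈ A)) hinf).2 h2k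
  omega

theorem ORplus.isRegularWeight_pow_cntA (hA : ORplus A) {t : ℕ} (ht : t ≠ 0) :
    IsRegularWeight fun n : ℕ ↦ (cntA A n : ℝ) ^ t := by
  obtain ⟨hinf, hOR, hPI⟩ := hA
  have hmono : Monotone fun n : ℕ ↦ (cntA A n : ℝ) ^ t := fun m n hmn ↦
    pow_le_pow_left₀ (Nat.cast_nonneg _) (by exact_mod_cast monotone_cntA_natCast A hmn) t
  have hnonneg : 0 ≤ fun n : ℕ ↦ (cntA A n : ℝ) ^ t := fun n ↦ by positivity
  have hone : (fun _ ↦ (1 : ℝ)) =O[atTop] fun n : ℕ ↦ (cntA A n : ℝ) ^ t :=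
    isBigO_of_eventually_le_mul (fun _ ↦ zero_le_one) zero_le_one <|
      ((tendsto_cntA_natCast hinf).eventually_ge_atTop 1).mono fun n hn ↦ by
        rw [one_mul]
        exact one_le_pow₀ (by exact_mod_cast hn)
  obtain ⟨D, hD, hDA⟩ := hPI.eventually_three_mul_cntA_le hinf
  have hgrowth : ∀ᶠ m : ℕ in atTop,
      (cntA A m : ℝ) ^ t ≤ (2 / 3) ^ t * (cntA A ↑(D * m) : ℝ) ^ t := by
    filter_upwards [hDA] with m hm
    rw [← mul_pow]
    refine pow_le_pow_left₀ (Nat.cast_nonneg _) ?_ t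
    have : (3 : ℝ) * cntA A m ≤ 2 * cntA A ↑(D * m) := by exact_mod_cast hm
    linarith
  exact ⟨hmono, hnonneg, hone,
    hmono.isBigO_sum_Ioc_div_self hnonneg hone (by positivity) (pow_lt_one₀ (by norm_num)
      (by norm_num) ht) hD hgrowth,
    hOR.isBigO_cntA_two_mul_natCast.pow t⟩

end Counting

theorem stmt_10 (A : Set ℕ) (hA : ORplus A) (t₁ t₂ : ℕ) (h₁ : 1 ≤ t₁) (h₂ : 1 ≤ t₂)
    (f g : ℕ → ℝ) (hf : ∀ n, 0 ≤ f n) (hg : ∀ n, 0 ≤ g n)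
    (hfθ : f =Θ[atTop] (fun n : ℕ => (cntA A n : ℝ) ^ t₁ / n))
    (hgθ : g =Θ[atTop] (fun n : ℕ => (cntA A n : ℝ) ^ t₂ / n)) :
    (fun n : ℕ => ∑ k ∈ Finset.Ioo 0 n, f k * g (n - k)) =Θ[atTop]
      (fun n : ℕ => (cntA A n : ℝ) ^ (t₁ + t₂) / n) := by
  have h := (hA.isRegularWeight_pow_cntA (by omega : t₁ ≠ 0)).isTheta_sum_Ioo_mul_sub
    (hA.isRegularWeight_pow_cntA (by omega : t₂ ≠ 0)) hf hg hfθ hgθ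
  simpa only [← pow_add] using h
end
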